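/- arXiv:1801.01225 — 2 statements merged into one kernel-verified Lean document; each statement's English description precedes it below -/
import Mathlib

section
/- Every connected graph G with v vertices and b blocks that is not a tree admits a sequence of graphs G = G_0, G_1, ..., G_{v-b-1}, where each G_{i+1} is obtained from G_i by contracting a single non-bridge edge (and simplifying multiple edges), such that G_{v-b-1} is a tree and no earlier G_i is a tree. -/
/-- Two edges are related if they are equal or lie on a common cycle; for a connected
graph the equivalence classes of (the equivalence closure of) this relation are
exactly the edge sets of the blocks of `G`. -/
def blockRel {V : Type*} (G : SimpleGraph V) (e f : G.edgeSet) : Prop :=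
  e = f ∨ ∃ (v : V) (w : G.Walk v v), w.IsCycle ∧ (e : Sym2 V) ∈ w.edges ∧ (f : Sym2 V) ∈ w.edges

/-- The number of blocks of `G`. -/
noncomputable def numBlocks {V : Type*} (G : SimpleGraph V) : ℕ :=
  Nat.card (Quot (blockRel G))

/-- The contraction `G/e` of the edge `e = uv`: the vertex `v` is removed and its
neighbors are attached to `u`; resulting multiple edges are merged. -/
def contractEdge {V : Type*} (G : SimpleGraph V) (u v : V) :
    SimpleGraph {w : V // w ≠ v} :=
  SimpleGraph.fromRel (fun a b =>
    G.Adj a.1 b.1 ∨ (a.1 = u ∧ G.Adj v b.1) ∨ (b.1 = u ∧ G.Adj v a.1))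

set_option linter.unusedSectionVars false
set_option maxHeartbeats 1000000

namespace CS
open SimpleGraph Walk

variable {V : Type*} [DecidableEq V] {G : SimpleGraph V}

lemma isPath_concat {x y z : V} {p : G.Walk x y} (hp : p.IsPath)
    (h : G.Adj y z) (hz : z ∉ p.support) : (p.concat h).IsPath := by
  rw [← Walk.isPath_reverse_iff, Walk.reverse_concat]
  exact hp.reverse.cons (by simpa using hz)

lemma path_edge_end : ∀ {x y : V} (p : G.Walk x y), p.IsPath →
    s(x,y) ∈ p.edges → p.length = 1 := by
  intro x y p
  induction p with
  | nil => simp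
  | @cons a c y h q ih =>
    intro hp he
    rw [Walk.edges_cons, List.mem_cons] at he
    rcases he with he | he
    · rw [Sym2.eq_iff] at he
      rcases he with ⟨-, rfl⟩ | ⟨rfl, rfl⟩
      · -- q : Walk y y, a path, so nil
        have : q.length = 0 := by
          by_contra hq
          have h2 := (Walk.cons_isPath_iff _ _).1 hp
          have : q.support.Nodup := h2.1.support_nodup
          cases q with
          | nil => exact hq rfl
          | cons h' q' =>
            have : y ∈ q'.support := Walk.end_mem_support q'
            have h3 := (Walk.cons_isPath_iff _ _).1 h2.1
            exact h3.2 this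
        simp [this]
      · exact absurd rfl h.ne
    · exfalso
      have h2 := (Walk.cons_isPath_iff _ _).1 hp
      exact h2.2 (Walk.fst_mem_support_of_mem_edges q he)

lemma mk_eq_of_cycle {c : V} {C : G.Walk c c} (hC : C.IsCycle)
    {g h : Sym2 V} (hg : g ∈ C.edges) (hh : h ∈ C.edges) :
    Quot.mk (blockRel G) ⟨g, C.edges_subset_edgeSet hg⟩ =
      Quot.mk (blockRel G) ⟨h, C.edges_subset_edgeSet hh⟩ :=
  Quot.sound (Or.inr ⟨c, C, hC, hg, hh⟩)

/-- The all-purpose cycle factory: close up a path `m' : c₀ → b₀` with one or two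
outside vertices. -/
lemma close_up {b₀ c₀ x y : V} (m' : G.Walk c₀ b₀) (hm : m'.IsPath)
    (hx : x ∉ m'.support) (hy : y ∉ m'.support)
    (hxb : G.Adj x b₀) (hyc : G.Adj y c₀)
    (hyb : y ≠ b₀) (hxc : x ≠ c₀)
    (hcb : x = y → c₀ ≠ b₀) (hxy : x = y ∨ G.Adj x y) :
    ∃ (r : V) (W : G.Walk r r), W.IsCycle ∧ s(x,b₀) ∈ W.edges ∧ s(y,c₀) ∈ W.edges ∧
      (∀ g ∈ m'.edges, g ∈ W.edges) ∧ (x ≠ y → s(x,y) ∈ W.edges) := by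
  rcases hxy with rfl | hadj
  · -- single closing vertex
    refine ⟨x, Walk.cons hyc (m'.concat hxb.symm), ?_, ?_, ?_, ?_, ?_⟩
    · rw [Walk.cons_isCycle_iff]
      refine ⟨isPath_concat hm hxb.symm hx, ?_⟩
      simp only [Walk.edges_concat, List.concat_eq_append, List.mem_append,
        List.mem_singleton]
      rintro (h | h)
      · exact hy (Walk.fst_mem_support_of_mem_edges m' h)
      · rw [Sym2.eq_iff] at h
        rcases h with ⟨h1, -⟩ | ⟨-, h2⟩
        · exact hyb h1
        · exact (hcb rfl) h2
    · rw [Sym2.eq_swap]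
      simp [Walk.edges_concat, List.concat_eq_append]
    · simp [Walk.edges_cons]
    · intro g hg
      simp [Walk.edges_concat, List.concat_eq_append, hg]
    · intro h; exact absurd rfl h
  · -- two closing vertices x ≠ y, edge x-y used
    have hxyne : x ≠ y := hadj.ne
    refine ⟨y, Walk.cons hyc ((m'.concat hxb.symm).concat hadj), ?_, ?_, ?_, ?_, ?_⟩
    · rw [Walk.cons_isCycle_iff]
      constructor
      · refine isPath_concat (isPath_concat hm hxb.symm hx) hadj ?_
        rw [Walk.support_concat, List.mem_append]
        rintro (h | h)
        · exact hy h
        · simp at h; exact hxyne h.symm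
      · simp only [Walk.edges_concat, List.concat_eq_append, List.mem_append,
          List.mem_singleton]
        rintro ((h | h) | h)
        · exact hy (Walk.fst_mem_support_of_mem_edges m' h)
        · rw [Sym2.eq_iff] at h
          rcases h with ⟨h1, -⟩ | ⟨h1, h2⟩
          · exact hyb h1
          · exact hxyne h1.symm
        · rw [Sym2.eq_iff] at h
          rcases h with ⟨h1, -⟩ | ⟨-, h2⟩
          · exact hxyne h1.symm
          · exact hxc h2.symm
    · rw [Sym2.eq_swap]
      simp [Walk.edges_concat, List.concat_eq_append]
    · simp [Walk.edges_cons]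
    · intro g hg
      simp [Walk.edges_concat, List.concat_eq_append, hg]
    · intro _
      simp [Walk.edges_concat, List.concat_eq_append]

/-- Two edges sharing an endvertex whose other ends are connected avoiding the center
lie on a common cycle (or are equal). -/
lemma class_eq_of_adj_adj {c x y : V} (hx : G.Adj c x) (hy : G.Adj c y)
    (w : G.Walk x y) (hc : c ∉ w.support) :
    Quot.mk (blockRel G) ⟨s(c,x), hx⟩ = Quot.mk (blockRel G) ⟨s(c,y), hy⟩ := by
  by_cases hxy : x = y
  · subst hxy; rfl
  · have hcP : c ∉ w.bypass.support := fun h => hc (w.support_bypass_subset h)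
    obtain ⟨r, W, hW, h1, h2, -, -⟩ :=
      close_up (m' := w.bypass) w.bypass_isPath hcP hcP hy hx hy.ne hx.ne
        (fun _ => hxy) (Or.inl rfl)
    exact mk_eq_of_cycle hW h2 h1

lemma path_nil {a : V} {t : G.Walk a a} (ht : t.IsPath) : t.length = 0 := by
  cases t with
  | nil => rfl
  | cons h' t' =>
    exfalso
    have h2 := (Walk.cons_isPath_iff _ _).1 ht
    exact h2.2 (Walk.end_mem_support t')

/-- Reachability avoiding two vertices. -/
def R2 (G : SimpleGraph V) (u v x y : V) : Prop :=
  ∃ w : G.Walk x y, u ∉ w.support ∧ v ∉ w.support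

lemma R2.ne₁ {u v x y : V} (h : R2 G u v x y) : x ≠ u := by
  obtain ⟨w, h1, h2⟩ := h; rintro rfl; exact h1 (Walk.start_mem_support _)

lemma R2.ne₂ {u v x y : V} (h : R2 G u v x y) : x ≠ v := by
  obtain ⟨w, h1, h2⟩ := h; rintro rfl; exact h2 (Walk.start_mem_support _)

lemma R2.ne₃ {u v x y : V} (h : R2 G u v x y) : y ≠ u := by
  obtain ⟨w, h1, h2⟩ := h; rintro rfl; exact h1 (Walk.end_mem_support _)

lemma R2.ne₄ {u v x y : V} (h : R2 G u v x y) : y ≠ v := by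
  obtain ⟨w, h1, h2⟩ := h; rintro rfl; exact h2 (Walk.end_mem_support _)

lemma R2.refl {u v x : V} (h1 : x ≠ u) (h2 : x ≠ v) : R2 G u v x x :=
  ⟨Walk.nil, by simp [Ne.symm h1], by simp [Ne.symm h2]⟩

lemma R2.symm {u v x y : V} (h : R2 G u v x y) : R2 G u v y x := by
  obtain ⟨w, h1, h2⟩ := h
  exact ⟨w.reverse, by simpa using h1, by simpa using h2⟩

lemma R2.trans {u v x y z : V} (h : R2 G u v x y) (h' : R2 G u v y z) : R2 G u v x z := by
  obtain ⟨w, h1, h2⟩ := h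
  obtain ⟨w', h1', h2'⟩ := h'
  refine ⟨w.append w', ?_, ?_⟩ <;> rw [Walk.mem_support_append_iff] <;> tauto

lemma R2.step {u v x y : V} (h : G.Adj x y) (hxu : x ≠ u) (hxv : x ≠ v)
    (hyu : y ≠ u) (hyv : y ≠ v) : R2 G u v x y :=
  ⟨Walk.cons h Walk.nil, by simp [Ne.symm hxu, Ne.symm hyu],
    by simp [Ne.symm hxv, Ne.symm hyv]⟩

lemma R2.of_walk {u v x y : V} (w : G.Walk x y) (h1 : u ∉ w.support) (h2 : v ∉ w.support)
    {t : V} (ht : t ∈ w.support) : R2 G u v x t := by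
  refine ⟨w.takeUntil t ht, fun hc => h1 ?_, fun hc => h2 ?_⟩ <;>
    exact Walk.support_takeUntil_subset w ht hc

/-- `x` lies in a component of `G - u - v` attaching to both `u` and `v`. -/
def AB (G : SimpleGraph V) (u v x : V) : Prop :=
  x ≠ u ∧ x ≠ v ∧ (∃ a, R2 G u v x a ∧ G.Adj u a) ∧ ∃ b, R2 G u v x b ∧ G.Adj v b

lemma AB.symm {u v x : V} (h : AB G u v x) : AB G v u x := by
  obtain ⟨h1, h2, ⟨a, ha, ha'⟩, ⟨b, hb, hb'⟩⟩ := h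
  refine ⟨h2, h1, ⟨b, ?_, hb'⟩, ⟨a, ?_, ha'⟩⟩
  · obtain ⟨w, w1, w2⟩ := hb; exact ⟨w, w2, w1⟩
  · obtain ⟨w, w1, w2⟩ := ha; exact ⟨w, w2, w1⟩

/-- From a path `u → v` of length ≥ 2, the second vertex is an attach-both witness. -/
lemma lemAB {u v : V} (P : G.Walk u v) (hP : P.IsPath) (h2 : 2 ≤ P.length) :
    ∃ (x : V) (h : G.Adj u x) (t : G.Walk x v), P = Walk.cons h t ∧ AB G u v x := by
  cases P with
  | nil => simp at h2
  | @cons _ x _ h t =>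
    have hP' := (Walk.cons_isPath_iff _ _).1 hP
    have htp : t.IsPath := hP'.1
    have hut : u ∉ t.support := hP'.2
    have hlt : 1 ≤ t.length := by
      simp only [Walk.length_cons] at h2; omega
    have hxv : x ≠ v := by
      rintro rfl
      have := path_nil htp; omega
    obtain ⟨y, hvy, m, hm⟩ : ∃ (y : V) (hvy : G.Adj v y) (m : G.Walk y x),
        t.reverse = Walk.cons hvy m := by
      cases htr : t.reverse with
      | nil =>
        exfalso
        have : t.reverse.length = 0 := by rw [htr]; rfl
        rw [Walk.length_reverse] at this; omega
      | cons ha m => exact ⟨_, ha, m, rfl⟩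
    have hrev : t.reverse.IsPath := htp.reverse
    rw [hm] at hrev
    have hrev' := (Walk.cons_isPath_iff _ _).1 hrev
    have hvm : v ∉ m.support := hrev'.2
    have hum : u ∉ m.support := by
      intro hc
      apply hut
      have : u ∈ t.reverse.support := by rw [hm, Walk.support_cons]; exact List.mem_cons_of_mem _ hc
      rwa [Walk.support_reverse, List.mem_reverse] at this
    refine ⟨x, h, t, rfl, h.ne', hxv, ⟨x, R2.refl h.ne' hxv, h⟩, ⟨y, ?_, hvy⟩⟩
    refine ⟨m.reverse, ?_, ?_⟩ <;> rw [Walk.support_reverse, List.mem_reverse] <;> assumption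

/-- A cycle through the edge `uv` decomposes as the edge plus a `u`-`v` path. -/
lemma rotuv {u v w : V} (C : G.Walk w w) (hC : C.IsCycle)
    (he : s(u,v) ∈ C.edges) :
    ∃ P : G.Walk u v, P.IsPath ∧ 2 ≤ P.length ∧ s(u,v) ∉ P.edges ∧
      (∀ g ∈ C.edges, g = s(u,v) ∨ g ∈ P.edges) ∧ ∀ g ∈ P.edges, g ∈ C.edges := by
  have hu : u ∈ C.support := C.fst_mem_support_of_mem_edges he
  set C₂ := C.rotate u hu with hC₂def
  have hC₂ : C₂.IsCycle := hC.rotate hu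
  have hperm : C₂.edges ~r C.edges := C.rotate_edges u hu
  have hmem : ∀ g : Sym2 V, g ∈ C₂.edges ↔ g ∈ C.edges := fun g => hperm.mem_iff
  have he₂ : s(u,v) ∈ C₂.edges := (hmem _).2 he
  have hlen : 3 ≤ C₂.length := hC₂.three_le_length
  clear_value C₂
  cases C₂ with
  | nil => simp at hlen
  | @cons _ b _ hub q =>
    have hq := (Walk.cons_isCycle_iff _ _).1 hC₂
    have hqp : q.IsPath := hq.1
    have hqlen : 2 ≤ q.length := by
      simp only [Walk.length_cons] at hlen; omega
    obtain ⟨c, huc, m, hm⟩ : ∃ (c : V) (huc : G.Adj u c) (m : G.Walk c b),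
        q.reverse = Walk.cons huc m := by
      cases htr : q.reverse with
      | nil =>
        exfalso
        have : q.reverse.length = 0 := by rw [htr]; rfl
        rw [Walk.length_reverse] at this; omega
      | cons ha m => exact ⟨_, ha, m, rfl⟩
    have hrev : q.reverse.IsPath := hqp.reverse
    rw [hm] at hrev
    have hrev' := (Walk.cons_isPath_iff _ _).1 hrev
    have hmp : m.IsPath := hrev'.1
    have hum : u ∉ m.support := hrev'.2
    have hqe : q.edges = m.edges.reverse ++ [s(u,c)] := by
      have : q.reverse.edges = s(u,c) :: m.edges := by rw [hm, Walk.edges_cons]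
      rw [Walk.edges_reverse] at this
      have := congrArg List.reverse this
      simpa using this
    have hbc : c ≠ b := by
      rintro rfl
      have := path_nil hmp
      have : q.length = 1 := by
        have h1 : q.reverse.length = m.length + 1 := by rw [hm]; simp
        rw [Walk.length_reverse] at h1; omega
      omega
    have hmedges : ∀ g ∈ m.edges, g ∈ q.edges := by
      intro g hg; rw [hqe]; simp [hg]
    rw [Walk.edges_cons, List.mem_cons] at he₂
    rcases he₂ with he₂ | he₂
    · -- s(u,v) = s(u,b), so b = v
      have hbv : b = v := by
        rw [Sym2.eq_iff] at he₂
        rcases he₂ with ⟨-, h⟩ | ⟨h, -⟩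
        · exact h.symm
        · exact absurd h hub.ne
      subst hbv
      refine ⟨q.reverse, hqp.reverse, by rwa [Walk.length_reverse], ?_, ?_, ?_⟩
      · rw [Walk.edges_reverse, List.mem_reverse]
        have := hC₂.edges_nodup
        rw [Walk.edges_cons] at this
        exact (List.nodup_cons.1 this).1
      · intro g hg
        rw [← hmem g, Walk.edges_cons, List.mem_cons] at hg
        rcases hg with rfl | hg
        · exact Or.inl rfl
        · right; rwa [Walk.edges_reverse, List.mem_reverse]
      · intro g hg
        rw [Walk.edges_reverse, List.mem_reverse] at hg
        rw [← hmem g, Walk.edges_cons]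
        exact List.mem_cons_of_mem _ hg
    · -- s(u,v) is the last edge, c = v
      rw [hqe, List.mem_append] at he₂
      rcases he₂ with he₂ | he₂
      · exfalso
        rw [List.mem_reverse] at he₂
        exact hum (Walk.fst_mem_support_of_mem_edges m he₂)
      · have hcv : c = v := by
          simp only [List.mem_singleton, Sym2.eq_iff] at he₂
          rcases he₂ with ⟨-, h⟩ | ⟨h, -⟩
          · exact h.symm
          · exact absurd h huc.ne
        obtain rfl : v = c := hcv.symm
        have hbv : b ≠ v := fun h => hbc h.symm
        refine ⟨Walk.cons hub m.reverse, ?_, ?_, ?_, ?_, ?_⟩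
        · refine Walk.IsPath.cons hmp.reverse ?_
          rw [Walk.support_reverse, List.mem_reverse]; exact hum
        · simp only [Walk.length_cons, Walk.length_reverse]
          have h1 : q.reverse.length = m.length + 1 := by rw [hm]; simp
          rw [Walk.length_reverse] at h1; omega
        · rw [Walk.edges_cons, List.mem_cons]
          rintro (h | h)
          · rw [Sym2.eq_iff] at h
            rcases h with ⟨-, h⟩ | ⟨h, -⟩
            · exact hbv h.symm
            · exact hub.ne h
          · rw [Walk.edges_reverse, List.mem_reverse] at h
            exact hum (Walk.fst_mem_support_of_mem_edges m h)
        · intro g hg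
          rw [← hmem g, Walk.edges_cons, List.mem_cons, hqe, List.mem_append] at hg
          rcases hg with rfl | hg | hg
          · right; rw [Walk.edges_cons]; exact List.mem_cons_self
          · right; rw [Walk.edges_cons, Walk.edges_reverse]
            exact List.mem_cons_of_mem _ hg
          · left; simpa using hg
        · intro g hg
          rw [Walk.edges_cons, List.mem_cons] at hg
          rw [← hmem g, Walk.edges_cons, List.mem_cons]
          rcases hg with rfl | hg
          · exact Or.inl rfl
          · right
            rw [Walk.edges_reverse, List.mem_reverse] at hg
            exact hmedges g hg

lemma ab_of_cycle_uv {u v w : V} (C : G.Walk w w) (hC : C.IsCycle)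
    (he : s(u,v) ∈ C.edges) : ∃ x, AB G u v x := by
  obtain ⟨P, hP, h2, -, -, -⟩ := rotuv C hC he
  obtain ⟨x, -, -, -, hab⟩ := lemAB P hP h2
  exact ⟨x, hab⟩

/-- A cycle through the edge `uv`, built from an attach-both witness. -/
lemma cycle_through_uv {u v : V} (huv : G.Adj u v) {x : V} (hx : AB G u v x) :
    ∃ (r : V) (W : G.Walk r r), W.IsCycle ∧ s(u,v) ∈ W.edges ∧
      ∃ g, g ∈ W.edges ∧ g ∈ G.edgeSet ∧ g ≠ s(u,v) := by
  obtain ⟨-, -, ⟨a, ra, hua⟩, ⟨b, rb, hvb⟩⟩ := hx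
  obtain ⟨w0, hw1, hw2⟩ := ra.symm.trans rb
  have hu' : u ∉ w0.bypass.support := fun h => hw1 (w0.support_bypass_subset h)
  have hv' : v ∉ w0.bypass.support := fun h => hw2 (w0.support_bypass_subset h)
  obtain ⟨r, W, hW, h1, h2, -, h3⟩ :=
    close_up (m' := w0.bypass) w0.bypass_isPath hv' hu' hvb hua
      (Ne.symm rb.ne₃) (Ne.symm ra.ne₄) (fun h => absurd h.symm huv.ne) (Or.inr huv.symm)
  refine ⟨r, W, hW, ?_, ⟨s(u,a), h2, hua, ?_⟩⟩
  · have h4 := h3 (fun h => huv.ne h.symm)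
    have h5 : s(u,v) = s(v,u) := Sym2.eq_swap
    rwa [h5]
  · intro h
    rw [Sym2.eq_iff] at h
    rcases h with ⟨-, h⟩ | ⟨h, -⟩
    · exact ra.ne₄ h
    · exact huv.ne h

/-- An edge `uv` is *good* if all attach-both vertices lie in one component of
`G - u - v`. -/
def Good (G : SimpleGraph V) (u v : V) : Prop :=
  G.Adj u v ∧ (∃ x, AB G u v x) ∧
    ∀ x y, AB G u v x → AB G u v y → R2 G u v x y

def compSet (G : SimpleGraph V) (u v x : V) : Set V := {y | R2 G u v x y}

lemma descend [Fintype V] :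
    ∀ n : ℕ, ∀ u v x : V, G.Adj u v → AB G u v x →
      (compSet G u v x).ncard ≤ n → ∃ p q, Good G p q := by
  intro n
  induction n using Nat.strong_induction_on with
  | _ n IH =>
  intro u v x huv hab hcard
  by_cases hg : Good G u v
  · exact ⟨u, v, hg⟩
  obtain ⟨hxu, hxv, ⟨a, ra, hua⟩, ⟨z, rz, hvz⟩⟩ := hab
  -- `u` is an attach-both witness for the edge `vz`
  have habu : AB G v z u := by
    refine ⟨huv.ne, Ne.symm rz.ne₃, ⟨u, R2.refl huv.ne (Ne.symm rz.ne₃), huv.symm⟩, ?_⟩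
    obtain ⟨W0, h1, h2⟩ := rz.symm.trans ra
    have hu0 : u ∉ W0.bypass.support := fun h => h1 (W0.support_bypass_subset h)
    have hv0 : v ∉ W0.bypass.support := fun h => h2 (W0.support_bypass_subset h)
    have hbp : W0.bypass.IsPath := W0.bypass_isPath
    cases hW : W0.bypass with
    | nil =>
      -- z = a, so u is adjacent to z
      refine ⟨u, R2.refl huv.ne (Ne.symm rz.ne₃), hua.symm⟩
    | @cons _ s₀ _ h t =>
      rw [hW] at hu0 hv0 hbp
      have hbp' := (Walk.cons_isPath_iff _ _).1 hbp
      have hzt : z ∉ t.support := hbp'.2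
      have hut : u ∉ t.support := fun hc => hu0 (List.mem_cons_of_mem _ hc)
      have hvt : v ∉ t.support := fun hc => hv0 (List.mem_cons_of_mem _ hc)
      refine ⟨s₀, ⟨Walk.cons hua t.reverse, ?_, ?_⟩, h⟩
      · rw [Walk.support_cons, List.mem_cons]
        rintro (hc | hc)
        · exact huv.ne hc.symm
        · rw [Walk.support_reverse, List.mem_reverse] at hc; exact hvt hc
      · rw [Walk.support_cons, List.mem_cons]
        rintro (hc | hc)
        · exact rz.ne₃ hc
        · rw [Walk.support_reverse, List.mem_reverse] at hc; exact hzt hc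
  by_cases hg2 : Good G v z
  · exact ⟨v, z, hg2⟩
  have hbad : ¬ ∀ x y, AB G v z x → AB G v z y → R2 G v z x y := by
    intro hall; exact hg2 ⟨hvz, ⟨u, habu⟩, hall⟩
  push_neg at hbad
  obtain ⟨w1, w2, hw1, hw2, hnr⟩ := hbad
  have hkey : ∃ w', AB G v z w' ∧ ¬ R2 G v z w' u := by
    by_cases h1 : R2 G v z w1 u
    · by_cases h2 : R2 G v z w2 u
      · exact absurd (h1.trans h2.symm) hnr
      · exact ⟨w2, hw2, h2⟩
    · exact ⟨w1, hw1, h1⟩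
  obtain ⟨w', hw', hwu⟩ := hkey
  obtain ⟨-, -, -, ⟨b', rb', hzb'⟩⟩ := id hw'
  have hb'1 : b' ≠ u := by rintro rfl; exact hwu rb'
  have hsub : ∀ y, R2 G v z w' y → R2 G u v x y := by
    intro y hy
    have hby : R2 G v z b' y := rb'.symm.trans hy
    obtain ⟨W2, hW2v, hW2z⟩ := hby
    have hW2u : u ∉ W2.support := by
      intro hc
      exact hwu (rb'.trans (R2.of_walk W2 hW2v hW2z hc))
    have h1 : R2 G u v b' y := ⟨W2, hW2u, hW2v⟩
    have h2 : R2 G u v z b' := R2.step hzb' rz.ne₃ rz.ne₄ hb'1 rb'.ne₃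
    exact (rz.trans h2).trans h1
  have hssub : compSet G v z w' ⊂ compSet G u v x := by
    constructor
    · intro y hy; exact hsub y hy
    · intro hcon
      have hz1 : z ∈ compSet G u v x := rz
      have hz2 : z ∉ compSet G v z w' := fun h => (R2.ne₄ h) rfl
      exact hz2 (hcon hz1)
  have hlt : (compSet G v z w').ncard < (compSet G u v x).ncard :=
    Set.ncard_lt_ncard hssub (Set.toFinite _)
  exact IH _ (lt_of_lt_of_le hlt hcard) v z w' hvz hw' le_rfl

theorem exists_good [Fintype V] {G : SimpleGraph V}
    (hcyc : ∃ (r : V) (C : G.Walk r r), C.IsCycle) : ∃ u v, Good G u v := by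
  obtain ⟨r, C, hC⟩ := hcyc
  cases C with
  | nil => have := hC.three_le_length; simp at this
  | @cons _ b _ h q =>
    have hab := ab_of_cycle_uv (Walk.cons h q) hC
      (by rw [Walk.edges_cons]; exact List.mem_cons_self)
    obtain ⟨x, hx⟩ := hab
    exact descend _ r b x h hx le_rfl

/-! ### Contraction machinery -/

variable {u v : V}

/-- The projection `V → V ∖ {v}` collapsing `v` to `u`. -/
def pv (hne : u ≠ v) (x : V) : {w : V // w ≠ v} :=
  if h : x = v then ⟨u, hne⟩ else ⟨x, h⟩

lemma pv_v (hne : u ≠ v) : pv hne v = ⟨u, hne⟩ := dif_pos rfl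

lemma pv_of_ne (hne : u ≠ v) {x : V} (h : x ≠ v) : pv hne x = ⟨x, h⟩ := dif_neg h

lemma pv_val (hne : u ≠ v) (a : {w : V // w ≠ v}) : pv hne a.1 = a := by
  rw [pv_of_ne hne a.2]

lemma pv_eq_iff (hne : u ≠ v) {x y : V} :
    pv hne x = pv hne y ↔ (x = y ∨ (x = u ∧ y = v) ∨ (x = v ∧ y = u)) := by
  unfold pv
  split_ifs with h1 h2 h2 <;> simp_all [Subtype.ext_iff] <;> tauto

lemma pv_eq_u_iff (hne : u ≠ v) {x : V} :
    pv hne x = ⟨u, hne⟩ ↔ x = u ∨ x = v := by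
  have : (⟨u, hne⟩ : {w : V // w ≠ v}) = pv hne u := (pv_of_ne hne hne).symm
  rw [this, pv_eq_iff]
  constructor
  · rintro (h | ⟨h1, h2⟩ | ⟨h1, -⟩)
    · exact Or.inl h
    · exact absurd h2 hne
    · exact Or.inr h1
  · rintro (h | h)
    · exact Or.inl h
    · exact Or.inr (Or.inr ⟨h, rfl⟩)

lemma contract_adj {a b : {w : V // w ≠ v}} :
    (contractEdge G u v).Adj a b ↔ a ≠ b ∧ (G.Adj a.1 b.1 ∨
      (a.1 = u ∧ G.Adj v b.1) ∨ (b.1 = u ∧ G.Adj v a.1)) := by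
  unfold contractEdge
  rw [SimpleGraph.fromRel_adj]
  constructor
  · rintro ⟨hne, h | h⟩
    · exact ⟨hne, h⟩
    · refine ⟨hne, ?_⟩
      rcases h with h | ⟨h1, h2⟩ | ⟨h1, h2⟩
      · exact Or.inl h.symm
      · exact Or.inr (Or.inr ⟨h1, h2⟩)
      · exact Or.inr (Or.inl ⟨h1, h2⟩)
  · rintro ⟨hne, h⟩; exact ⟨hne, Or.inl h⟩

lemma proj_adj (huv : G.Adj u v) {a b : V} (hab : G.Adj a b) (hnab : s(a,b) ≠ s(u,v)) :
    (contractEdge G u v).Adj (pv huv.ne a) (pv huv.ne b) := by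
  have hne := huv.ne
  have hne2 : pv hne a ≠ pv hne b := by
    rw [Ne, pv_eq_iff]
    rintro (h | ⟨h1, h2⟩ | ⟨h1, h2⟩)
    · exact hab.ne h
    · exact hnab (by rw [h1, h2])
    · exact hnab (by rw [h1, h2, Sym2.eq_swap])
  rw [contract_adj]
  refine ⟨hne2, ?_⟩
  by_cases hav : a = v
  · obtain rfl : v = a := hav.symm
    have hbv : b ≠ v := hab.ne'
    rw [pv_v, pv_of_ne hne hbv]
    exact Or.inr (Or.inl ⟨rfl, hab⟩)
  · by_cases hbv : b = v
    · obtain rfl : v = b := hbv.symm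
      rw [pv_v, pv_of_ne hne hav]
      exact Or.inr (Or.inr ⟨rfl, hab.symm⟩)
    · rw [pv_of_ne hne hav, pv_of_ne hne hbv]
      exact Or.inl hab

lemma lift_adj (hne : u ≠ v) {a b : {w : V // w ≠ v}} (h : (contractEdge G u v).Adj a b)
    (ha : a ≠ ⟨u, hne⟩) (hb : b ≠ ⟨u, hne⟩) : G.Adj a.1 b.1 := by
  rw [contract_adj] at h
  rcases h.2 with h' | ⟨h1, -⟩ | ⟨h1, -⟩
  · exact h'
  · exact absurd (Subtype.ext h1) ha
  · exact absurd (Subtype.ext h1) hb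

lemma adj_from_u (hne : u ≠ v) {b : {w : V // w ≠ v}}
    (h : (contractEdge G u v).Adj ⟨u, hne⟩ b) : G.Adj u b.1 ∨ G.Adj v b.1 := by
  rw [contract_adj] at h
  rcases h.2 with h' | ⟨-, h2⟩ | ⟨h1, -⟩
  · exact Or.inl h'
  · exact Or.inr h2
  · exact absurd (Subtype.ext h1).symm h.1

lemma walk_proj (huv : G.Adj u v) : ∀ {x y : V} (w : G.Walk x y), s(u,v) ∉ w.edges →
    ∃ w' : (contractEdge G u v).Walk (pv huv.ne x) (pv huv.ne y),
      w'.support = w.support.map (pv huv.ne) ∧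
      w'.edges = w.edges.map (Sym2.map (pv huv.ne)) := by
  intro x y w
  induction w with
  | nil => exact fun _ => ⟨Walk.nil, by simp, by simp⟩
  | cons h p ih =>
    intro hme
    rw [Walk.edges_cons, List.mem_cons] at hme; push_neg at hme
    obtain ⟨w', h1, h2⟩ := ih hme.2
    exact ⟨Walk.cons (proj_adj huv h (Ne.symm hme.1)) w',
      by simp [h1], by simp [h2, Sym2.map_pair_eq]⟩

lemma walk_lift (hne : u ≠ v) : ∀ {x y : {w : V // w ≠ v}}
    (w : (contractEdge G u v).Walk x y), (⟨u, hne⟩ : {w : V // w ≠ v}) ∉ w.support →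
    ∃ w' : G.Walk x.1 y.1, w'.support = w.support.map Subtype.val ∧
      w'.edges = w.edges.map (Sym2.map Subtype.val) := by
  intro x y w
  induction w with
  | nil => exact fun _ => ⟨Walk.nil, by simp, by simp⟩
  | @cons a c y h p ih =>
    intro hme
    rw [Walk.support_cons, List.mem_cons] at hme; push_neg at hme
    have hc : c ≠ ⟨u, hne⟩ := by
      intro hcc; exact hme.2 (hcc ▸ Walk.start_mem_support p)
    obtain ⟨w', h1, h2⟩ := ih hme.2
    exact ⟨Walk.cons (lift_adj hne h (Ne.symm hme.1) hc) w',
      by simp [h1], by simp [h2, Sym2.map_pair_eq]⟩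

lemma reach_proj (huv : G.Adj u v) : ∀ {x y : V} (w : G.Walk x y),
    (contractEdge G u v).Reachable (pv huv.ne x) (pv huv.ne y) := by
  intro x y w
  induction w with
  | nil => exact SimpleGraph.Reachable.refl _
  | @cons a c y h p ih =>
    by_cases he : s(a, c) = s(u,v)
    · have : pv huv.ne a = pv huv.ne c := by
        rw [Sym2.eq_iff] at he
        rcases he with ⟨rfl, rfl⟩ | ⟨rfl, rfl⟩
        · rw [pv_v, pv_of_ne huv.ne huv.ne]
        · rw [pv_v, pv_of_ne huv.ne huv.ne]
      rw [this]; exact ih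
    · exact ((proj_adj huv h he).reachable).trans ih

lemma contract_connected (huv : G.Adj u v) (hc : G.Connected) :
    (contractEdge G u v).Connected := by
  rw [SimpleGraph.connected_iff]
  refine ⟨?_, ⟨⟨u, huv.ne⟩⟩⟩
  intro a b
  have h := reach_proj huv ((hc a.1 b.1).some)
  rwa [pv_val, pv_val] at h

lemma pclass_aux (huv : G.Adj u v) {x1 y1 x2 y2 : V}
    (had1 : G.Adj x1 y1) (had2 : G.Adj x2 y2)
    (h1 : pv huv.ne x1 = pv huv.ne x2) (h2 : pv huv.ne y1 = pv huv.ne y2) :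
    s(x1,y1) = s(x2,y2) ∨ ∃ b, b ≠ u ∧ b ≠ v ∧ G.Adj u b ∧ G.Adj v b ∧
      ((s(x1,y1) = s(u,b) ∧ s(x2,y2) = s(v,b)) ∨
       (s(x1,y1) = s(v,b) ∧ s(x2,y2) = s(u,b))) := by
  rw [pv_eq_iff] at h1 h2
  rcases h1 with h1 | ⟨hx1, hx2⟩ | ⟨hx1, hx2⟩
  · subst h1
    rcases h2 with h2 | ⟨hy1, hy2⟩ | ⟨hy1, hy2⟩
    · subst h2; exact Or.inl rfl
    · obtain rfl : u = y1 := hy1.symm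
      obtain rfl : v = y2 := hy2.symm
      exact Or.inr ⟨x1, had1.ne, had2.ne, had1.symm, had2.symm,
        Or.inl ⟨Sym2.eq_swap, Sym2.eq_swap⟩⟩
    · obtain rfl : v = y1 := hy1.symm
      obtain rfl : u = y2 := hy2.symm
      exact Or.inr ⟨x1, had2.ne, had1.ne, had2.symm, had1.symm,
        Or.inr ⟨Sym2.eq_swap, Sym2.eq_swap⟩⟩
  · obtain rfl : u = x1 := hx1.symm
    obtain rfl : v = x2 := hx2.symm
    rcases h2 with h2 | ⟨hy1, hy2⟩ | ⟨hy1, hy2⟩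
    · subst h2
      exact Or.inr ⟨y1, had1.ne', had2.ne', had1, had2, Or.inl ⟨rfl, rfl⟩⟩
    · obtain rfl : u = y1 := hy1.symm
      exact absurd rfl had1.ne
    · obtain rfl : v = y1 := hy1.symm
      obtain rfl : u = y2 := hy2.symm
      exact Or.inl Sym2.eq_swap
  · obtain rfl : v = x1 := hx1.symm
    obtain rfl : u = x2 := hx2.symm
    rcases h2 with h2 | ⟨hy1, hy2⟩ | ⟨hy1, hy2⟩
    · subst h2
      exact Or.inr ⟨y1, had2.ne', had1.ne', had2, had1, Or.inr ⟨rfl, rfl⟩⟩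
    · obtain rfl : u = y1 := hy1.symm
      obtain rfl : v = y2 := hy2.symm
      exact Or.inl Sym2.eq_swap
    · obtain rfl : v = y1 := hy1.symm
      exact absurd rfl had1.ne

lemma pclass (huv : G.Adj u v) {g g' : Sym2 V} (hg : g ∈ G.edgeSet) (hg' : g' ∈ G.edgeSet)
    (h : Sym2.map (pv huv.ne) g = Sym2.map (pv huv.ne) g') :
    g = g' ∨ ∃ b, b ≠ u ∧ b ≠ v ∧ G.Adj u b ∧ G.Adj v b ∧
      ((g = s(u,b) ∧ g' = s(v,b)) ∨ (g = s(v,b) ∧ g' = s(u,b))) := by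
  revert hg hg' h
  induction g using Sym2.ind with | _ x1 y1 =>
  induction g' using Sym2.ind with | _ x2 y2 =>
  intro hg hg' h
  rw [SimpleGraph.mem_edgeSet] at hg hg'
  rw [Sym2.map_pair_eq, Sym2.map_pair_eq, Sym2.eq_iff] at h
  rcases h with ⟨h1, h2⟩ | ⟨h1, h2⟩
  · exact pclass_aux huv hg hg' h1 h2
  · have := pclass_aux huv hg hg'.symm h1 h2
    rwa [Sym2.eq_swap (a := y2) (b := x2)] at this

lemma proj_edge_mem (huv : G.Adj u v) {g : Sym2 V} (hg : g ∈ G.edgeSet)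
    (hne : g ≠ s(u,v)) : Sym2.map (pv huv.ne) g ∈ (contractEdge G u v).edgeSet := by
  induction g using Sym2.ind with | _ a b =>
  rw [Sym2.map_pair_eq, SimpleGraph.mem_edgeSet]
  exact proj_adj huv hg hne

lemma pre_exists (huv : G.Adj u v) {eb : Sym2 {w : V // w ≠ v}}
    (heb : eb ∈ (contractEdge G u v).edgeSet) :
    ∃ g, g ∈ G.edgeSet ∧ Sym2.map (pv huv.ne) g = eb := by
  induction eb using Sym2.ind with | _ a b =>
  rw [SimpleGraph.mem_edgeSet, contract_adj] at heb
  obtain ⟨hne2, hcase⟩ := heb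
  rcases hcase with h | ⟨h1, h2⟩ | ⟨h1, h2⟩
  · exact ⟨s(a.1, b.1), h, by rw [Sym2.map_pair_eq, pv_val, pv_val]⟩
  · refine ⟨s(v, b.1), h2, ?_⟩
    have ha : (⟨u, huv.ne⟩ : {w : V // w ≠ v}) = a := Subtype.ext h1.symm
    rw [Sym2.map_pair_eq, pv_v, pv_val, ha]
  · refine ⟨s(v, a.1), h2, ?_⟩
    have hb : (⟨u, huv.ne⟩ : {w : V // w ≠ v}) = b := Subtype.ext h1.symm
    rw [Sym2.map_pair_eq, pv_v, pv_val, hb, Sym2.eq_swap]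

lemma class_eq_of_proj_eq (huv : G.Adj u v) {g g' : Sym2 V}
    (hg : g ∈ G.edgeSet) (hg' : g' ∈ G.edgeSet)
    (h : Sym2.map (pv huv.ne) g = Sym2.map (pv huv.ne) g') :
    Quot.mk (blockRel G) ⟨g, hg⟩ = Quot.mk (blockRel G) ⟨g', hg'⟩ := by
  rcases pclass huv hg hg' h with rfl | ⟨b, hbu, hbv, hub, hvb, hcase⟩
  · rfl
  · have tri : (Walk.cons huv (Walk.cons hvb (Walk.cons hub.symm Walk.nil))).IsCycle := by
      rw [Walk.cons_isCycle_iff]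
      constructor
      · refine Walk.IsPath.cons (Walk.IsPath.cons (Walk.IsPath.nil) ?_) ?_
        · simp [hbu]
        · simp [Ne.symm huv.ne, Ne.symm hbv]
      · simp only [Walk.edges_cons, Walk.edges_nil, List.mem_cons, List.mem_singleton]
        rintro (h' | h' | h')
        · rw [Sym2.eq_iff] at h'
          rcases h' with ⟨rfl, h2⟩ | ⟨h1, -⟩
          · exact hbv h2.symm
          · exact hbu h1.symm
        · rw [Sym2.eq_iff] at h'
          rcases h' with ⟨h1, -⟩ | ⟨-, h2⟩
          · exact hbu h1.symm
          · exact hbv h2.symm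
        · simp at h'
    have e1 : s(u,b) ∈ (Walk.cons huv (Walk.cons hvb (Walk.cons hub.symm Walk.nil))).edges := by
      rw [Sym2.eq_swap]; simp [Walk.edges_cons]
    have e2 : s(v,b) ∈ (Walk.cons huv (Walk.cons hvb (Walk.cons hub.symm Walk.nil))).edges := by
      simp [Walk.edges_cons]
    rcases hcase with ⟨rfl, rfl⟩ | ⟨rfl, rfl⟩
    · exact mk_eq_of_cycle tri e1 e2
    · exact mk_eq_of_cycle tri e2 e1

lemma pv_eq_u_pair (huv : G.Adj u v) {x : V} (h : x = u ∨ x = v) :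
    pv huv.ne x = ⟨u, huv.ne⟩ := by
  rcases h with rfl | rfl
  · exact pv_of_ne huv.ne huv.ne
  · exact pv_v huv.ne

lemma link (huv : G.Adj u v) (hgood : Good G u v) {x x' : V}
    (hx : AB G u v x) (hx' : AB G u v x')
    (hax : (contractEdge G u v).Adj ⟨u, huv.ne⟩ (pv huv.ne x))
    (hax' : (contractEdge G u v).Adj ⟨u, huv.ne⟩ (pv huv.ne x')) :
    Quot.mk (blockRel (contractEdge G u v)) ⟨s(⟨u, huv.ne⟩, pv huv.ne x), hax⟩ =
    Quot.mk (blockRel (contractEdge G u v)) ⟨s(⟨u, huv.ne⟩, pv huv.ne x'), hax'⟩ := by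
  obtain ⟨W, hW1, hW2⟩ := hgood.2.2 x x' hx hx'
  have hWe : s(u,v) ∉ W.edges := fun hc => hW1 (W.fst_mem_support_of_mem_edges hc)
  obtain ⟨W', hs, -⟩ := walk_proj huv W hWe
  have hu' : (⟨u, huv.ne⟩ : {w : V // w ≠ v}) ∉ W'.support := by
    rw [hs]
    intro hc
    obtain ⟨t, ht, htt⟩ := List.mem_map.1 hc
    rw [pv_eq_u_iff] at htt
    rcases htt with rfl | rfl
    · exact hW1 ht
    · exact hW2 ht
  exact class_eq_of_adj_adj hax hax' W' hu'

lemma lemB {w0 : V} (huv : G.Adj u v) (C : G.Walk w0 w0) (hC : C.IsCycle)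
    (huvC : s(u,v) ∈ C.edges) :
    ∃ (x : V) (hx : AB G u v x)
      (hax : (contractEdge G u v).Adj ⟨u, huv.ne⟩ (pv huv.ne x)),
      ∀ g (hgC : g ∈ C.edges) (hne : g ≠ s(u,v)),
        Quot.mk (blockRel (contractEdge G u v)) ⟨Sym2.map (pv huv.ne) g,
          proj_edge_mem huv (C.edges_subset_edgeSet hgC) hne⟩ =
        Quot.mk _ ⟨s(⟨u, huv.ne⟩, pv huv.ne x), hax⟩ := by
  obtain ⟨P, hP, h2, hPuv, hCcov, hPC⟩ := rotuv C hC huvC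
  obtain ⟨x, hux, t, hPt, hab⟩ := lemAB P hP h2
  subst hPt
  have hP' := (Walk.cons_isPath_iff _ _).1 hP
  have htp : t.IsPath := hP'.1
  have hut : u ∉ t.support := hP'.2
  have hxv : x ≠ v := by
    rintro rfl
    have := path_nil htp
    simp only [Walk.length_cons] at h2; omega
  have hsux : s(u,x) ≠ s(u,v) := by
    intro hc; rw [Sym2.eq_iff] at hc
    rcases hc with ⟨-, h⟩ | ⟨h, -⟩
    · exact hxv h
    · exact huv.ne h
  have hax0 : (contractEdge G u v).Adj (pv huv.ne u) (pv huv.ne x) := proj_adj huv hux hsux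
  rw [pv_of_ne huv.ne huv.ne] at hax0
  have htuv : s(u,v) ∉ t.edges := by
    intro hc; exact hPuv (by rw [Walk.edges_cons]; exact List.mem_cons_of_mem _ hc)
  obtain ⟨t', hts, hte⟩ := walk_proj huv t htuv
  -- rewrite the end of t' from `pv v` to `⟨u, _⟩`
  refine ⟨x, hab, hax0, ?_⟩
  intro g hgC hne
  have hgP : g ∈ (Walk.cons hux t).edges := by
    rcases hCcov g hgC with h | h
    · exact absurd h hne
    · exact h
  rw [Walk.edges_cons, List.mem_cons] at hgP
  by_cases hlen : t.length = 1
  · -- triangle-ish: only two edges, both project to the anchor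
    have htedge : t.edges = [s(x,v)] := by
      cases t with
      | nil => simp at hlen
      | @cons _ c _ h' t2 =>
        have : t2.length = 0 := by simp only [Walk.length_cons] at hlen; omega
        cases t2 with
        | nil => simp
        | cons h'' t3 => simp [Walk.length_cons] at this
    rcases hgP with rfl | hgt
    · refine congrArg _ (Subtype.ext ?_)
      show Sym2.map (pv huv.ne) s(u,x) = s((⟨u, huv.ne⟩ : {w : V // w ≠ v}), pv huv.ne x)
      rw [Sym2.map_pair_eq, pv_of_ne huv.ne huv.ne]
    · rw [htedge, List.mem_singleton] at hgt
      subst hgt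
      refine congrArg _ (Subtype.ext ?_)
      show Sym2.map (pv huv.ne) s(x,v) = s((⟨u, huv.ne⟩ : {w : V // w ≠ v}), pv huv.ne x)
      rw [Sym2.map_pair_eq, pv_v, Sym2.eq_swap]
  · -- general case: project t and close up into a cycle in the contraction
    have hlen2 : 2 ≤ t.length := by
      have : 1 ≤ t.length := by simp only [Walk.length_cons] at h2; omega
      omega
    have huu_t : ∀ a ∈ t.support, a ≠ u := fun a ha hc => hut (hc ▸ ha)
    have ht'p : t'.IsPath := by
      refine Walk.IsPath.mk' ?_
      rw [hts]
      refine List.Nodup.map_on ?_ htp.support_nodup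
      intro a ha b hb hpq
      rw [pv_eq_iff] at hpq
      rcases hpq with h | ⟨h1, -⟩ | ⟨-, h1⟩
      · exact h
      · exact absurd h1 (huu_t a ha)
      · exact absurd h1 (huu_t b hb)
    have hWc : (Walk.cons hax0 (t'.copy rfl (pv_v huv.ne))).IsCycle := by
      rw [Walk.cons_isCycle_iff]
      refine ⟨(Walk.isPath_copy _ _ _).2 ht'p, ?_⟩
      rw [Walk.edges_copy, hte]
      intro hc
      obtain ⟨g0, hg0, hg0e⟩ := List.mem_map.1 hc
      have hg0E : g0 ∈ G.edgeSet := t.edges_subset_edgeSet hg0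
      have : Sym2.map (pv huv.ne) g0 = Sym2.map (pv huv.ne) s(u,x) := by
        rw [hg0e, Sym2.map_pair_eq, pv_of_ne huv.ne huv.ne]
      rcases pclass huv hg0E hux this with rfl | ⟨b, hbu, hbv, -, -, hcase⟩
      · exact hut (t.fst_mem_support_of_mem_edges hg0)
      · rcases hcase with ⟨rfl, -⟩ | ⟨rfl, hxb⟩
        · exact hut (t.fst_mem_support_of_mem_edges hg0)
        · have hxb' : x = b := by
            rw [Sym2.eq_iff] at hxb
            rcases hxb with ⟨-, h⟩ | ⟨h, -⟩
            · exact h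
            · exact absurd h.symm hbu
          subst hxb'
          have : s(x,v) ∈ t.edges := by rwa [Sym2.eq_swap]
          have := path_edge_end t htp this
          omega
    rcases hgP with rfl | hgt
    · refine congrArg _ (Subtype.ext ?_)
      show Sym2.map (pv huv.ne) s(u,x) = s((⟨u, huv.ne⟩ : {w : V // w ≠ v}), pv huv.ne x)
      rw [Sym2.map_pair_eq, pv_of_ne huv.ne huv.ne]
    · have hmem : Sym2.map (pv huv.ne) g ∈ (Walk.cons hax0 (t'.copy rfl (pv_v huv.ne))).edges := by
        rw [Walk.edges_cons, Walk.edges_copy, hte]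
        exact List.mem_cons_of_mem _ (List.mem_map_of_mem hgt)
      have hmem2 : s((⟨u, huv.ne⟩ : {w : V // w ≠ v}), pv huv.ne x) ∈
          (Walk.cons hax0 (t'.copy rfl (pv_v huv.ne))).edges := by
        rw [Walk.edges_cons]; exact List.mem_cons_self
      exact mk_eq_of_cycle hWc hmem hmem2

lemma tuv (huv : G.Adj u v) (hgood : Good G u v) {w1 w2 : V}
    (C1 : G.Walk w1 w1) (C2 : G.Walk w2 w2) (h1 : C1.IsCycle) (h2 : C2.IsCycle)
    (hu1 : s(u,v) ∈ C1.edges) (hu2 : s(u,v) ∈ C2.edges)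
    {g h : Sym2 V} (hg : g ∈ C1.edges) (hh : h ∈ C2.edges)
    (hgne : g ≠ s(u,v)) (hhne : h ≠ s(u,v)) :
    Quot.mk (blockRel (contractEdge G u v)) ⟨Sym2.map (pv huv.ne) g,
      proj_edge_mem huv (C1.edges_subset_edgeSet hg) hgne⟩ =
    Quot.mk (blockRel (contractEdge G u v)) ⟨Sym2.map (pv huv.ne) h,
      proj_edge_mem huv (C2.edges_subset_edgeSet hh) hhne⟩ := by
  obtain ⟨x1, hx1, hax1, key1⟩ := lemB huv C1 h1 hu1
  obtain ⟨x2, hx2, hax2, key2⟩ := lemB huv C2 h2 hu2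
  rw [key1 g hg hgne, key2 h hh hhne]
  exact link huv hgood hx1 hx2 hax1 hax2

lemma mem_tail_support_of_closed {w0 t : V} (C : G.Walk w0 w0) (hC : C.IsCycle)
    (h : t ∈ C.support) : t ∈ C.support.tail := by
  cases C with
  | nil => have := hC.three_le_length; simp at this
  | cons h' q =>
    rw [Walk.support_cons, List.tail_cons]
    rw [Walk.support_cons, List.mem_cons] at h
    rcases h with rfl | h
    · exact q.end_mem_support
    · exact h


lemma tproj (huv : G.Adj u v) (hgood : Good G u v) {w0 : V}
    (C : G.Walk w0 w0) (hC : C.IsCycle)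
    {g h : Sym2 V} (hg : g ∈ C.edges) (hh : h ∈ C.edges)
    (hgne : g ≠ s(u,v)) (hhne : h ≠ s(u,v)) :
    Quot.mk (blockRel (contractEdge G u v)) ⟨Sym2.map (pv huv.ne) g,
      proj_edge_mem huv (C.edges_subset_edgeSet hg) hgne⟩ =
    Quot.mk (blockRel (contractEdge G u v)) ⟨Sym2.map (pv huv.ne) h,
      proj_edge_mem huv (C.edges_subset_edgeSet hh) hhne⟩ := by
  by_cases huvC : s(u,v) ∈ C.edges
  · exact tuv huv hgood C C hC hC huvC huvC hg hh hgne hhne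
  by_cases hboth : u ∈ C.support ∧ v ∈ C.support
  · -- split the cycle at u and v into two u-v paths, close each with the edge uv
    obtain ⟨hu, hv⟩ := hboth
    have hC₂ : (C.rotate u hu).IsCycle := hC.rotate hu
    have hperm : (C.rotate u hu).edges ~r C.edges := C.rotate_edges u hu
    have hmem : ∀ g' : Sym2 V, g' ∈ (C.rotate u hu).edges ↔ g' ∈ C.edges :=
      fun g' => hperm.mem_iff
    have hvC₂ : v ∈ (C.rotate u hu).support := by
      have hp := C.support_rotate u hu
      exact List.mem_of_mem_tail (hp.mem_iff.2 (mem_tail_support_of_closed C hC hv))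
    set C₂ := C.rotate u hu with hC₂def
    clear_value C₂
    clear hC₂def
    cases C₂ with
    | nil => have := hC₂.three_le_length; simp at this
    | @cons _ b _ hub q =>
      have hq := (Walk.cons_isCycle_iff q hub).1 hC₂
      have hvq : v ∈ q.support := by
        rw [Walk.support_cons, List.mem_cons] at hvC₂
        rcases hvC₂ with h' | h'
        · exact absurd h'.symm huv.ne
        · exact h'
      have hB : s(u,b) ≠ s(u,v) := by
        intro hc
        exact huvC ((hmem _).1 (by rw [← hc, Walk.edges_cons]; exact List.mem_cons_self))
      have hbv : b ≠ v := fun hc => hB (by rw [hc])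
      have hPa : (q.takeUntil v hvq).IsPath := hq.1.takeUntil hvq
      have hP2 : (q.dropUntil v hvq).IsPath := hq.1.dropUntil hvq
      have hspec : (q.takeUntil v hvq).append (q.dropUntil v hvq) = q := q.take_spec hvq
      have hnodup : ((q.takeUntil v hvq).support ++ (q.dropUntil v hvq).support.tail).Nodup := by
        rw [← Walk.support_append, hspec]; exact hq.1.support_nodup
      have huPa : u ∉ (q.takeUntil v hvq).support := by
        intro hc
        have hu2 : u ∈ (q.dropUntil v hvq).support.tail := by
          have h3 : u ∈ (q.dropUntil v hvq).support := Walk.end_mem_support _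
          rw [Walk.support_eq_cons, List.mem_cons] at h3
          rcases h3 with h3 | h3
          · exact absurd h3 huv.ne
          · exact h3
        exact (List.disjoint_of_nodup_append hnodup) hc hu2
      have hqedges : q.edges = (q.takeUntil v hvq).edges ++ (q.dropUntil v hvq).edges := by
        conv_lhs => rw [← hspec]
        rw [Walk.edges_append]
      have hD1 : (Walk.cons huv.symm (Walk.cons hub (q.takeUntil v hvq))).IsCycle := by
        rw [Walk.cons_isCycle_iff]
        refine ⟨hPa.cons huPa, ?_⟩
        rw [Walk.edges_cons, List.mem_cons]
        rintro (h' | h')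
        · rw [Sym2.eq_iff] at h'
          rcases h' with ⟨h1, -⟩ | ⟨h1, -⟩
          · exact huv.ne h1.symm
          · exact hbv h1.symm
        · exact huPa (Walk.snd_mem_support_of_mem_edges _ h')
      have hD2 : (Walk.cons huv (q.dropUntil v hvq)).IsCycle := by
        rw [Walk.cons_isCycle_iff]
        refine ⟨hP2, ?_⟩
        intro hc
        exact huvC ((hmem _).1 (by
          rw [Walk.edges_cons, hqedges]
          exact List.mem_cons_of_mem _ (List.mem_append_right _ hc)))
      have huvD1 : s(u,v) ∈ (Walk.cons huv.symm (Walk.cons hub (q.takeUntil v hvq))).edges := by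
        rw [Walk.edges_cons]
        have heq : s(u,v) = s(v,u) := Sym2.eq_swap
        rw [heq]
        exact List.mem_cons_self
      have huvD2 : s(u,v) ∈ (Walk.cons huv (q.dropUntil v hvq)).edges := by
        rw [Walk.edges_cons]; exact List.mem_cons_self
      have hcov : ∀ g' (hg' : g' ∈ C.edges),
          g' ∈ (Walk.cons huv.symm (Walk.cons hub (q.takeUntil v hvq))).edges ∨
          g' ∈ (Walk.cons huv (q.dropUntil v hvq)).edges := by
        intro g' hg'
        have h3 : g' ∈ Walk.edges (Walk.cons hub q) := (hmem g').2 hg'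
        rw [Walk.edges_cons, List.mem_cons, hqedges, List.mem_append] at h3
        rcases h3 with rfl | h' | h'
        · left
          rw [Walk.edges_cons, Walk.edges_cons]
          exact List.mem_cons_of_mem _ (List.mem_cons_self)
        · left
          rw [Walk.edges_cons, Walk.edges_cons]
          exact List.mem_cons_of_mem _ (List.mem_cons_of_mem _ h')
        · right
          rw [Walk.edges_cons]
          exact List.mem_cons_of_mem _ h'
      rcases hcov g hg with h1 | h1 <;> rcases hcov h hh with h2 | h2
      · exact tuv huv hgood _ _ hD1 hD1 huvD1 huvD1 h1 h2 hgne hhne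
      · exact tuv huv hgood _ _ hD1 hD2 huvD1 huvD2 h1 h2 hgne hhne
      · exact tuv huv hgood _ _ hD2 hD1 huvD2 huvD1 h1 h2 hgne hhne
      · exact tuv huv hgood _ _ hD2 hD2 huvD2 huvD2 h1 h2 hgne hhne
  · -- at most one of u, v lies on C: project the whole cycle verbatim
    cases C with
    | nil => have := hC.three_le_length; simp at this
    | @cons _ z _ hadj q =>
      have hq := (Walk.cons_isCycle_iff q hadj).1 hC
      have hzuv : s(w0, z) ≠ s(u,v) := by
        intro hc
        exact huvC (by rw [← hc, Walk.edges_cons]; exact List.mem_cons_self)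
      have hquv : s(u,v) ∉ q.edges := by
        intro hc
        exact huvC (by rw [Walk.edges_cons]; exact List.mem_cons_of_mem _ hc)
      obtain ⟨q', hqs, hqe⟩ := walk_proj huv q hquv
      have hsub : ∀ a, a ∈ q.support → a ∈ (Walk.cons hadj q).support := by
        intro a ha; rw [Walk.support_cons]; exact List.mem_cons_of_mem _ ha
      have hwz : w0 ∈ (Walk.cons hadj q).support := Walk.start_mem_support _
      have hzz : z ∈ (Walk.cons hadj q).support := hsub z q.start_mem_support
      have hq'p : q'.IsPath := by
        refine Walk.IsPath.mk' ?_
        rw [hqs]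
        refine List.Nodup.map_on ?_ hq.1.support_nodup
        intro a ha b' hb' hpq
        rw [pv_eq_iff] at hpq
        rcases hpq with h' | ⟨h1, h2⟩ | ⟨h1, h2⟩
        · exact h'
        · exact absurd ⟨h1 ▸ hsub a ha, h2 ▸ hsub b' hb'⟩ hboth
        · exact absurd ⟨h2 ▸ hsub b' hb', h1 ▸ hsub a ha⟩ hboth
      have hKadj : (contractEdge G u v).Adj (pv huv.ne w0) (pv huv.ne z) :=
        proj_adj huv hadj hzuv
      have hWc : (Walk.cons hKadj q').IsCycle := by
        rw [Walk.cons_isCycle_iff]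
        refine ⟨hq'p, ?_⟩
        rw [hqe]
        intro hc
        obtain ⟨g0, hg0, hg0e⟩ := List.mem_map.1 hc
        have hg0E : g0 ∈ G.edgeSet := q.edges_subset_edgeSet hg0
        have heq : Sym2.map (pv huv.ne) g0 = Sym2.map (pv huv.ne) s(w0,z) := by
          rw [hg0e, Sym2.map_pair_eq]
        rcases pclass huv hg0E hadj heq with rfl | ⟨b, hbu, hbv, -, -, hcase⟩
        · exact hq.2 hg0
        · have huS : u ∈ (Walk.cons hadj q).support ∧ v ∈ (Walk.cons hadj q).support := by
            rcases hcase with ⟨hg1, hg2⟩ | ⟨hg1, hg2⟩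
            · constructor
              · exact hsub u (by rw [hg1] at hg0; exact q.fst_mem_support_of_mem_edges hg0)
              · rw [Sym2.eq_iff] at hg2
                rcases hg2 with ⟨h1, -⟩ | ⟨-, h2⟩
                · exact h1 ▸ hwz
                · exact h2 ▸ hzz
            · constructor
              · rw [Sym2.eq_iff] at hg2
                rcases hg2 with ⟨h1, -⟩ | ⟨-, h2⟩
                · exact h1 ▸ hwz
                · exact h2 ▸ hzz
              · exact hsub v (by rw [hg1] at hg0; exact q.fst_mem_support_of_mem_edges hg0)
          exact hboth huS
      have hproj : ∀ g' (hg' : g' ∈ (Walk.cons hadj q).edges) (h' : g' ≠ s(u,v)),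
          Sym2.map (pv huv.ne) g' ∈ (Walk.cons hKadj q').edges := by
        intro g' hg' h'
        rw [Walk.edges_cons, List.mem_cons] at hg'
        rw [Walk.edges_cons, List.mem_cons]
        rcases hg' with rfl | hg'
        · left; rw [Sym2.map_pair_eq]
        · right; rw [hqe]; exact List.mem_map_of_mem hg'
      exact mk_eq_of_cycle hWc (hproj g hg hgne) (hproj h hh hhne)

lemma mapval_pv (hne : u ≠ v) (eb : Sym2 {w : V // w ≠ v}) :
    Sym2.map (pv hne) (Sym2.map Subtype.val eb) = eb := by
  induction eb using Sym2.ind with | _ a b =>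
  rw [Sym2.map_pair_eq, Sym2.map_pair_eq, pv_val, pv_val]

lemma lift_cycle (huv : G.Adj u v) {r : {w : V // w ≠ v}}
    (C : (contractEdge G u v).Walk r r) (hC : C.IsCycle)
    {e1 e2 : Sym2 {w : V // w ≠ v}} (he1 : e1 ∈ C.edges) (he2 : e2 ∈ C.edges) :
    ∃ (g g' : Sym2 V) (hg : g ∈ G.edgeSet) (hg' : g' ∈ G.edgeSet),
      Sym2.map (pv huv.ne) g = e1 ∧ Sym2.map (pv huv.ne) g' = e2 ∧
      Quot.mk (blockRel G) ⟨g, hg⟩ = Quot.mk (blockRel G) ⟨g', hg'⟩ := by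
  by_cases huu : (⟨u, huv.ne⟩ : {w : V // w ≠ v}) ∈ C.support
  · -- the collapsed vertex lies on the cycle: rotate there and lift with closing edges
    have hC₂ : (C.rotate _ huu).IsCycle := hC.rotate huu
    have hperm : (C.rotate _ huu).edges ~r C.edges := C.rotate_edges _ huu
    have he1' : e1 ∈ (C.rotate _ huu).edges := hperm.mem_iff.2 he1
    have he2' : e2 ∈ (C.rotate _ huu).edges := hperm.mem_iff.2 he2
    set C₂ := C.rotate _ huu with hC₂def
    clear_value C₂
    clear hC₂def he1 he2
    cases C₂ with
    | nil => have := hC₂.three_le_length; simp at this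
    | @cons _ b _ hub q =>
      have hq := (Walk.cons_isCycle_iff q hub).1 hC₂
      have hqlen : 2 ≤ q.length := by
        have := hC₂.three_le_length
        simp only [Walk.length_cons] at this; omega
      obtain ⟨c, huc, m, hm⟩ : ∃ (c : {w : V // w ≠ v}) (huc : (contractEdge G u v).Adj ⟨u, huv.ne⟩ c)
          (m : (contractEdge G u v).Walk c b), q.reverse = Walk.cons huc m := by
        cases htr : q.reverse with
        | nil =>
          exfalso
          have h0 : q.reverse.length = 0 := by rw [htr]; rfl
          rw [Walk.length_reverse] at h0; omega
        | cons ha m => exact ⟨_, ha, m, rfl⟩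
      have hrev : q.reverse.IsPath := hq.1.reverse
      rw [hm] at hrev
      have hrev' := (Walk.cons_isPath_iff _ _).1 hrev
      have hmp : m.IsPath := hrev'.1
      have hum : (⟨u, huv.ne⟩ : {w : V // w ≠ v}) ∉ m.support := hrev'.2
      have hqe : q.edges = m.edges.reverse ++ [s((⟨u, huv.ne⟩ : {w : V // w ≠ v}), c)] := by
        have h0 : q.reverse.edges = s((⟨u, huv.ne⟩ : {w : V // w ≠ v}), c) :: m.edges := by
          rw [hm, Walk.edges_cons]
        rw [Walk.edges_reverse] at h0
        have := congrArg List.reverse h0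
        simpa using this
      have hbc : c ≠ b := by
        rintro rfl
        have h0 := path_nil hmp
        have h1 : q.reverse.length = m.length + 1 := by rw [hm]; simp
        rw [Walk.length_reverse] at h1; omega
      obtain ⟨m', hms, hme⟩ := walk_lift huv.ne m hum
      have hmp' : m'.IsPath := Walk.IsPath.mk'
        (by rw [hms]; exact List.Nodup.map Subtype.val_injective hmp.support_nodup)
      have hu_m' : u ∉ m'.support := by
        rw [hms]
        intro hc
        obtain ⟨t, ht, htu⟩ := List.mem_map.1 hc
        exact hum (by rwa [show t = (⟨u, huv.ne⟩ : {w : V // w ≠ v}) from Subtype.ext htu] at ht)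
      have hv_m' : v ∉ m'.support := by
        rw [hms]
        intro hc
        obtain ⟨t, ht, htv⟩ := List.mem_map.1 hc
        exact t.2 htv
      have hbu : b.1 ≠ u := fun hc => hub.ne' (Subtype.ext hc)
      have hcu : c.1 ≠ u := fun hc => huc.ne' (Subtype.ext hc)
      have hbc' : c.1 ≠ b.1 := fun hc => hbc (Subtype.ext hc)
      obtain ⟨xcl, hxb, hxflag⟩ : ∃ x0, G.Adj x0 b.1 ∧ (x0 = u ∨ x0 = v) := by
        rcases adj_from_u huv.ne hub with h' | h'
        · exact ⟨u, h', Or.inl rfl⟩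
        · exact ⟨v, h', Or.inr rfl⟩
      obtain ⟨ycl, hyc, hyflag⟩ : ∃ y0, G.Adj y0 c.1 ∧ (y0 = u ∨ y0 = v) := by
        rcases adj_from_u huv.ne huc with h' | h'
        · exact ⟨u, h', Or.inl rfl⟩
        · exact ⟨v, h', Or.inr rfl⟩
      have hxm : xcl ∉ m'.support := by
        rcases hxflag with rfl | rfl
        · exact hu_m'
        · exact hv_m'
      have hym : ycl ∉ m'.support := by
        rcases hyflag with rfl | rfl
        · exact hu_m'
        · exact hv_m'
      have hyb : ycl ≠ b.1 := by
        rcases hyflag with rfl | rfl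
        · exact Ne.symm hbu
        · exact Ne.symm b.2
      have hxc : xcl ≠ c.1 := by
        rcases hxflag with rfl | rfl
        · exact Ne.symm hcu
        · exact Ne.symm c.2
      have hxy : xcl = ycl ∨ G.Adj xcl ycl := by
        rcases hxflag with rfl | rfl <;> rcases hyflag with rfl | rfl
        · exact Or.inl rfl
        · exact Or.inr huv
        · exact Or.inr huv.symm
        · exact Or.inl rfl
      obtain ⟨r0, W, hW, hWb, hWc2, hWm, -⟩ :=
        close_up m' hmp' hxm hym hxb hyc hyb hxc (fun _ => hbc') hxy
      have key : ∀ eb, eb ∈ (Walk.cons hub q).edges →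
          ∃ g, g ∈ W.edges ∧ Sym2.map (pv huv.ne) g = eb := by
        intro eb heb
        rw [Walk.edges_cons, List.mem_cons] at heb
        rcases heb with rfl | heb
        · refine ⟨s(xcl, b.1), hWb, ?_⟩
          rw [Sym2.map_pair_eq, pv_eq_u_pair huv hxflag, pv_val]
        · rw [hqe, List.mem_append] at heb
          rcases heb with heb | heb
          · rw [List.mem_reverse] at heb
            refine ⟨Sym2.map Subtype.val eb, ?_, mapval_pv huv.ne eb⟩
            exact hWm _ (by rw [hme]; exact List.mem_map_of_mem heb)
          · rw [List.mem_singleton] at heb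
            subst heb
            refine ⟨s(ycl, c.1), hWc2, ?_⟩
            rw [Sym2.map_pair_eq, pv_eq_u_pair huv hyflag, pv_val]
      obtain ⟨g, hgW, hgm⟩ := key e1 he1'
      obtain ⟨g', hgW', hgm'⟩ := key e2 he2'
      exact ⟨g, g', W.edges_subset_edgeSet hgW, W.edges_subset_edgeSet hgW', hgm, hgm',
        mk_eq_of_cycle hW hgW hgW'⟩
  · -- verbatim lift
    cases C with
    | nil => have := hC.three_le_length; simp at this
    | @cons _ z _ hadj q =>
      have hq := (Walk.cons_isCycle_iff q hadj).1 hC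
      have hr : r ≠ ⟨u, huv.ne⟩ := fun hc => huu (hc ▸ Walk.start_mem_support _)
      have hqu : (⟨u, huv.ne⟩ : {w : V // w ≠ v}) ∉ q.support := fun hc =>
        huu (by rw [Walk.support_cons]; exact List.mem_cons_of_mem _ hc)
      have hz : z ≠ ⟨u, huv.ne⟩ := fun hc => hqu (hc ▸ q.start_mem_support)
      obtain ⟨q', hqs, hqe⟩ := walk_lift huv.ne q hqu
      have hadj' : G.Adj r.1 z.1 := lift_adj huv.ne hadj hr hz
      have hq'p : q'.IsPath := Walk.IsPath.mk'
        (by rw [hqs]; exact List.Nodup.map Subtype.val_injective hq.1.support_nodup)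
      have hWc : (Walk.cons hadj' q').IsCycle := by
        rw [Walk.cons_isCycle_iff]
        refine ⟨hq'p, ?_⟩
        rw [hqe]
        intro hc
        obtain ⟨g0, hg0, hg0e⟩ := List.mem_map.1 hc
        have hg0eq : g0 = s(r, z) := by
          refine Sym2.map.injective Subtype.val_injective ?_
          rw [hg0e, Sym2.map_pair_eq]
        exact hq.2 (hg0eq ▸ hg0)
      have key : ∀ eb, eb ∈ (Walk.cons hadj q).edges →
          ∃ g, g ∈ (Walk.cons hadj' q').edges ∧ Sym2.map (pv huv.ne) g = eb := by
        intro eb heb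
        refine ⟨Sym2.map Subtype.val eb, ?_, mapval_pv huv.ne eb⟩
        rw [Walk.edges_cons, List.mem_cons] at heb
        rw [Walk.edges_cons, List.mem_cons]
        rcases heb with rfl | heb
        · left; rw [Sym2.map_pair_eq]
        · right; rw [hqe]; exact List.mem_map_of_mem heb
      obtain ⟨g, hgW, hgm⟩ := key e1 he1
      obtain ⟨g', hgW', hgm'⟩ := key e2 he2
      exact ⟨g, g', (Walk.cons hadj' q').edges_subset_edgeSet hgW,
        (Walk.cons hadj' q').edges_subset_edgeSet hgW', hgm, hgm',
        mk_eq_of_cycle hWc hgW hgW'⟩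

lemma not_isBridge_of_good (huv : G.Adj u v) (hgood : Good G u v) :
    ¬ G.IsBridge s(u,v) := by
  obtain ⟨x, hx⟩ := hgood.2.1
  obtain ⟨r, W, hW, hmem, -⟩ := cycle_through_uv huv hx
  intro hbr
  rw [SimpleGraph.isBridge_iff_mem_and_forall_cycle_notMem huv] at hbr
  exact hbr W hW hmem

lemma numBlocks_contract [Fintype V] (huv : G.Adj u v) (hgood : Good G u v) :
    numBlocks (contractEdge G u v) = numBlocks G := by
  classical
  obtain ⟨x0, hx0⟩ := hgood.2.1
  obtain ⟨r0, C0, hC0, hC0uv, g0, hg0C, hg0E, hg0ne⟩ := cycle_through_uv huv hx0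
  haveI : Finite ↥G.edgeSet := (Set.toFinite _).to_subtype
  haveI : Finite ↥(contractEdge G u v).edgeSet := (Set.toFinite _).to_subtype
  haveI finG : Finite (Quot (blockRel G)) :=
    Finite.of_surjective _ (Quot.mk_surjective (r := blockRel G))
  haveI finK : Finite (Quot (blockRel (contractEdge G u v))) :=
    Finite.of_surjective _ (Quot.mk_surjective (r := blockRel (contractEdge G u v)))
  have h1 : Nat.card (Quot (blockRel (contractEdge G u v))) ≤ Nat.card (Quot (blockRel G)) := by
    set F1 : G.edgeSet → Quot (blockRel (contractEdge G u v)) := fun g =>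
      if hz : (g : Sym2 V) = s(u,v)
      then Quot.mk _ ⟨Sym2.map (pv huv.ne) g0, proj_edge_mem huv hg0E hg0ne⟩
      else Quot.mk _ ⟨Sym2.map (pv huv.ne) g.1, proj_edge_mem huv g.2 hz⟩ with hF1
    have compat : ∀ a b, blockRel G a b → F1 a = F1 b := by
      intro a b hab
      rcases hab with heq | ⟨w, C, hC, ha, hb⟩
      · rw [heq]
      · by_cases hza : (a : Sym2 V) = s(u,v) <;> by_cases hzb : (b : Sym2 V) = s(u,v) <;>
          rw [hF1] <;> simp only
        · rw [dif_pos hza, dif_pos hzb]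
        · rw [dif_pos hza, dif_neg hzb]
          exact tuv huv hgood C0 C hC0 hC hC0uv (hza ▸ ha) hg0C hb hg0ne hzb
        · rw [dif_neg hza, dif_pos hzb]
          exact tuv huv hgood C C0 hC hC0 (hzb ▸ hb) hC0uv ha hg0C hza hg0ne
        · rw [dif_neg hza, dif_neg hzb]
          exact tproj huv hgood C hC ha hb hza hzb
    refine Nat.card_le_card_of_surjective (Quot.lift F1 compat) ?_
    intro y
    induction y using Quot.ind with | _ eb =>
    obtain ⟨g, hgE, hgm⟩ := pre_exists huv eb.2
    have hgne : g ≠ s(u,v) := by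
      rintro rfl
      apply SimpleGraph.not_isDiag_of_mem_edgeSet _ eb.2
      have hd : Sym2.map (pv huv.ne) s(u,v) =
          s((⟨u, huv.ne⟩ : {w : V // w ≠ v}), (⟨u, huv.ne⟩ : {w : V // w ≠ v})) := by
        rw [Sym2.map_pair_eq, pv_of_ne huv.ne huv.ne, pv_v]
      rw [← hgm, hd]
      exact Sym2.mk_isDiag_iff.2 rfl
    refine ⟨Quot.mk _ ⟨g, hgE⟩, ?_⟩
    show F1 ⟨g, hgE⟩ = Quot.mk _ eb
    rw [hF1]; simp only
    rw [dif_neg hgne]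
    congr 1
    exact Subtype.ext hgm
  have h2 : Nat.card (Quot (blockRel G)) ≤ Nat.card (Quot (blockRel (contractEdge G u v))) := by
    set F2 : (contractEdge G u v).edgeSet → Quot (blockRel G) := fun eb =>
      Quot.mk _ ⟨(pre_exists huv eb.2).choose, (pre_exists huv eb.2).choose_spec.1⟩ with hF2
    have compat : ∀ a b, blockRel (contractEdge G u v) a b → F2 a = F2 b := by
      intro a b hab
      rcases hab with heq | ⟨w, C, hC, ha, hb⟩
      · rw [heq]
      · obtain ⟨g, g', hg, hg', hm1, hm2, hcls⟩ := lift_cycle huv C hC ha hb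
        rw [hF2]; simp only
        have e1 := class_eq_of_proj_eq huv (pre_exists huv a.2).choose_spec.1 hg
          (by rw [(pre_exists huv a.2).choose_spec.2, hm1])
        have e2 := class_eq_of_proj_eq huv hg' (pre_exists huv b.2).choose_spec.1
          (by rw [hm2, (pre_exists huv b.2).choose_spec.2])
        rw [e1, hcls, e2]
    refine Nat.card_le_card_of_surjective (Quot.lift F2 compat) ?_
    intro y
    induction y using Quot.ind with | _ g =>
    by_cases hz : (g : Sym2 V) = s(u,v)
    · have hgC0 : (g : Sym2 V) ∈ C0.edges := by rw [hz]; exact hC0uv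
      have step : Quot.mk (blockRel G) ⟨(g : Sym2 V), C0.edges_subset_edgeSet hgC0⟩ =
          Quot.mk _ ⟨g0, C0.edges_subset_edgeSet hg0C⟩ := mk_eq_of_cycle hC0 hgC0 hg0C
      refine ⟨Quot.mk _ ⟨Sym2.map (pv huv.ne) g0, proj_edge_mem huv hg0E hg0ne⟩, ?_⟩
      show F2 _ = _
      rw [hF2]; simp only
      have e1 := class_eq_of_proj_eq huv
        (pre_exists huv (proj_edge_mem huv hg0E hg0ne)).choose_spec.1 hg0E
        ((pre_exists huv (proj_edge_mem huv hg0E hg0ne)).choose_spec.2)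
      rw [e1, ← step]
    · refine ⟨Quot.mk _ ⟨Sym2.map (pv huv.ne) g.1, proj_edge_mem huv g.2 hz⟩, ?_⟩
      show F2 _ = _
      rw [hF2]; simp only
      exact class_eq_of_proj_eq huv
        (pre_exists huv (proj_edge_mem huv g.2 hz)).choose_spec.1 g.2
        ((pre_exists huv (proj_edge_mem huv g.2 hz)).choose_spec.2)
  exact le_antisymm h1 h2

/-! ### Trees and counting -/

lemma numBlocks_eq_card_edges_of_acyclic (hG : G.IsAcyclic) :
    numBlocks G = Nat.card G.edgeSet := by
  unfold numBlocks
  refine Nat.card_congr ⟨Quot.lift id ?_, Quot.mk _, ?_, ?_⟩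
  · intro a b hab
    rcases hab with heq | ⟨w, C, hC, -, -⟩
    · exact heq
    · exact absurd hC (hG C)
  · intro q; induction q using Quot.ind with | _ a => rfl
  · intro a; rfl

lemma numBlocks_tree [Fintype V] (hG : G.IsTree) : numBlocks G = Fintype.card V - 1 := by
  classical
  haveI : Fintype ↥G.edgeSet := Fintype.ofFinite _
  have hacyc : G.IsAcyclic := ((SimpleGraph.isTree_iff _).1 hG).2
  have h2 := hG.card_edgeFinset
  rw [SimpleGraph.edgeFinset_card] at h2
  rw [numBlocks_eq_card_edges_of_acyclic hacyc, Nat.card_eq_fintype_card]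
  omega

lemma isTree_of_card_le_one [Fintype V] (h : Fintype.card V ≤ 1) (hc : G.Connected) :
    G.IsTree := by
  haveI := Fintype.card_le_one_iff_subsingleton.1 h
  rw [show G.IsTree ↔ _ from SimpleGraph.isTree_iff G]
  refine ⟨hc, ?_⟩
  intro w C hC
  have h3 := hC.three_le_length
  cases C with
  | nil => simp at h3
  | cons h' q => exact h'.ne (Subsingleton.elim _ _)

lemma exists_cycle_of_not_tree (hc : G.Connected) (hnt : ¬ G.IsTree) :
    ∃ (r : V) (C : G.Walk r r), C.IsCycle := by
  have hna : ¬ G.IsAcyclic := fun ha => hnt ((SimpleGraph.isTree_iff G).2 ⟨hc, ha⟩)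
  unfold SimpleGraph.IsAcyclic at hna
  push_neg at hna
  obtain ⟨r, C, hC⟩ := hna
  exact ⟨r, C, hC⟩

/-! ### Isomorphism invariance -/

omit [DecidableEq V] in
lemma blockRel_iso_forward {V' : Type*} {H : SimpleGraph V'} (φ : G ≃g H)
    (a b : G.edgeSet) (h : blockRel G a b) :
    blockRel H (φ.mapEdgeSet a) (φ.mapEdgeSet b) := by
  have hinj : Function.Injective ⇑φ.toHom := fun x y hxy => φ.toEquiv.injective hxy
  rcases h with heq | ⟨w, C, hC, ha, hb⟩
  · left; rw [heq]
  · right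
    refine ⟨φ w, C.map φ.toHom, (Walk.map_isCycle_iff_of_injective hinj).2 hC, ?_, ?_⟩
    · show Sym2.map ⇑φ.toHom (a : Sym2 V) ∈ (C.map φ.toHom).edges
      rw [Walk.edges_map]
      exact List.mem_map_of_mem ha
    · show Sym2.map ⇑φ.toHom (b : Sym2 V) ∈ (C.map φ.toHom).edges
      rw [Walk.edges_map]
      exact List.mem_map_of_mem hb

omit [DecidableEq V] in
lemma numBlocks_iso {V' : Type*} {H : SimpleGraph V'} (φ : G ≃g H) :
    numBlocks G = numBlocks H := by
  unfold numBlocks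
  refine Nat.card_congr (Quot.congr φ.mapEdgeSet ?_)
  intro a b
  constructor
  · exact blockRel_iso_forward φ a b
  · intro h
    have h2 := blockRel_iso_forward φ.symm _ _ h
    have ea : φ.symm.mapEdgeSet (φ.mapEdgeSet a) = a := by
      apply Subtype.ext
      show Sym2.map ⇑φ.symm.toHom (Sym2.map ⇑φ.toHom (a : Sym2 V)) = (a : Sym2 V)
      rw [Sym2.map_map]
      have : (⇑φ.symm.toHom ∘ ⇑φ.toHom) = id := by
        funext x; exact φ.symm_apply_apply x
      rw [this, Sym2.map_id]
      rfl
    have eb : φ.symm.mapEdgeSet (φ.mapEdgeSet b) = b := by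
      apply Subtype.ext
      show Sym2.map ⇑φ.symm.toHom (Sym2.map ⇑φ.toHom (b : Sym2 V)) = (b : Sym2 V)
      rw [Sym2.map_map]
      have : (⇑φ.symm.toHom ∘ ⇑φ.toHom) = id := by
        funext x; exact φ.symm_apply_apply x
      rw [this, Sym2.map_id]
      rfl
    rwa [ea, eb] at h2

omit [DecidableEq V] in
lemma isAcyclic_of_iso {V' : Type*} {H : SimpleGraph V'} (φ : G ≃g H)
    (h : H.IsAcyclic) : G.IsAcyclic := by
  intro w C hC
  have hinj : Function.Injective ⇑φ.toHom := fun x y hxy => φ.toEquiv.injective hxy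
  exact h _ ((Walk.map_isCycle_iff_of_injective hinj).2 hC)

omit [DecidableEq V] in
lemma isTree_iso {V' : Type*} {H : SimpleGraph V'} (φ : G ≃g H) :
    G.IsTree ↔ H.IsTree := by
  rw [SimpleGraph.isTree_iff, SimpleGraph.isTree_iff, φ.connected_iff]
  constructor
  · rintro ⟨h1, h2⟩; exact ⟨h1, isAcyclic_of_iso φ.symm h2⟩
  · rintro ⟨h1, h2⟩; exact ⟨h1, isAcyclic_of_iso φ h2⟩

def relabIso {W X : Type*} (H : SimpleGraph W) (e : W ≃ X) : H ≃g H.comap ⇑e.symm :=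
  ⟨e, by simp [SimpleGraph.comap_adj]⟩

lemma card_ne_subtype [Fintype V] (v0 : V) :
    Fintype.card {w : V // w ≠ v0} = Fintype.card V - 1 := by
  classical
  have h1 : Fintype.card {w : V // w ≠ v0} = Fintype.card V - Fintype.card {w : V // w = v0} := by
    exact Fintype.card_subtype_compl _
  rw [h1, Fintype.card_subtype_eq]

lemma blocks_le_aux : ∀ n : ℕ, ∀ (H : SimpleGraph (Fin n)), H.Connected → ¬ H.IsTree →
    numBlocks H + 2 ≤ n := by
  intro n
  induction n using Nat.strong_induction_on with
  | _ n IH =>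
  intro H hc hnt
  have hn2 : 2 ≤ n := by
    by_contra hcon
    push_neg at hcon
    exact hnt (isTree_of_card_le_one (by simp; omega) hc)
  obtain ⟨u0, v0, hgood⟩ := exists_good (exists_cycle_of_not_tree hc hnt)
  have huv : H.Adj u0 v0 := hgood.1
  have hnb := numBlocks_contract huv hgood
  have hconn' := contract_connected huv hc
  have hcard : Fintype.card {w : Fin n // w ≠ v0} = n - 1 := by
    rw [card_ne_subtype, Fintype.card_fin]
  let e : {w : Fin n // w ≠ v0} ≃ Fin (n - 1) := Fintype.equivFinOfCardEq hcard
  have φ : contractEdge H u0 v0 ≃g (contractEdge H u0 v0).comap ⇑e.symm := relabIso _ e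
  have hnb' : numBlocks ((contractEdge H u0 v0).comap ⇑e.symm) = numBlocks H := by
    rw [← numBlocks_iso φ, hnb]
  have hconn'' : ((contractEdge H u0 v0).comap ⇑e.symm).Connected := φ.connected_iff.1 hconn'
  by_cases htree : ((contractEdge H u0 v0).comap ⇑e.symm).IsTree
  · have hcount := numBlocks_tree htree
    rw [Fintype.card_fin] at hcount
    omega
  · have := IH (n-1) (by omega) _ hconn'' htree
    omega

lemma blocks_le [Fintype V] (hc : G.Connected) (hnt : ¬ G.IsTree) :
    numBlocks G + 2 ≤ Fintype.card V := by
  classical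
  have φ : G ≃g G.comap ⇑(Fintype.equivFin V).symm := relabIso G (Fintype.equivFin V)
  have h := blocks_le_aux (Fintype.card V) _ (φ.connected_iff.1 hc)
    (fun ht => hnt ((isTree_iso φ).2 ht))
  rwa [numBlocks_iso φ]

lemma isTree_of_numBlocks [Fintype V] (hc : G.Connected)
    (hb : numBlocks G = Fintype.card V - 1) : G.IsTree := by
  by_contra h
  have h1 := blocks_le hc h
  have h2 : 0 < Fintype.card V := @Fintype.card_pos _ _ hc.nonempty
  omega

lemma step_lemma [Fintype V] (hc : G.Connected) (hnt : ¬ G.IsTree) :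
    ∃ u w, G.Adj u w ∧ ¬ G.IsBridge s(u,w) ∧ (contractEdge G u w).Connected ∧
      numBlocks (contractEdge G u w) = numBlocks G := by
  obtain ⟨u0, v0, hgood⟩ := exists_good (exists_cycle_of_not_tree hc hnt)
  exact ⟨u0, v0, hgood.1, not_isBridge_of_good hgood.1 hgood,
    contract_connected hgood.1 hc, numBlocks_contract hgood.1 hgood⟩

/-! ### The contraction sequence -/

open Classical in
noncomputable def nextG {m : ℕ} (H : SimpleGraph (Fin m)) : SimpleGraph (Fin (m - 1)) :=
  if h : H.Connected ∧ ¬ H.IsTree then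
    (contractEdge H (step_lemma h.1 h.2).choose
        (step_lemma h.1 h.2).choose_spec.choose).comap
      ⇑(Fintype.equivFinOfCardEq (by rw [card_ne_subtype, Fintype.card_fin] :
        Fintype.card {w : Fin m // w ≠ (step_lemma h.1 h.2).choose_spec.choose} = m - 1)).symm
  else ⊥

lemma nextG_spec {m : ℕ} {H : SimpleGraph (Fin m)} (h1 : H.Connected) (h2 : ¬ H.IsTree) :
    ∃ u w, H.Adj u w ∧ ¬ H.IsBridge s(u,w) ∧
      Nonempty (contractEdge H u w ≃g nextG H) ∧ (nextG H).Connected ∧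
      numBlocks (nextG H) = numBlocks H := by
  have hcond : H.Connected ∧ ¬ H.IsTree := ⟨h1, h2⟩
  unfold nextG
  rw [dif_pos hcond]
  have spec := (step_lemma hcond.1 hcond.2).choose_spec.choose_spec
  refine ⟨_, _, spec.1, spec.2.1, ⟨relabIso _ _⟩, ?_, ?_⟩
  · exact (Iso.connected_iff (relabIso _ _)).1 spec.2.2.1
  · exact (numBlocks_iso (relabIso _ _)).symm.trans spec.2.2.2

noncomputable def seqG (m : ℕ) (G0 : SimpleGraph (Fin m)) : (i : ℕ) → SimpleGraph (Fin (m - i))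
  | 0 => G0
  | (i+1) => nextG (seqG m G0 i)

end CS

theorem exists_contraction_sequence' {V : Type*} [Fintype V] [DecidableEq V]
    (G : SimpleGraph V) (hconn : G.Connected) (hnt : ¬ G.IsTree) :
    ∃ Gs : (i : ℕ) → i < Fintype.card V - numBlocks G →
        SimpleGraph (Fin (Fintype.card V - i)),
      (∃ h0 : 0 < Fintype.card V - numBlocks G, Nonempty (G ≃g Gs 0 h0)) ∧
      (∀ i (h : i + 1 < Fintype.card V - numBlocks G),
        ∃ u w, (Gs i (Nat.lt_of_succ_lt h)).Adj u w ∧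
          ¬ (Gs i (Nat.lt_of_succ_lt h)).IsBridge s(u, w) ∧
          Nonempty (contractEdge (Gs i (Nat.lt_of_succ_lt h)) u w ≃g Gs (i + 1) h)) ∧
      (∃ hl : Fintype.card V - numBlocks G - 1 < Fintype.card V - numBlocks G,
        (Gs (Fintype.card V - numBlocks G - 1) hl).IsTree) ∧
      (∀ i (h : i < Fintype.card V - numBlocks G),
        i ≠ Fintype.card V - numBlocks G - 1 → ¬ (Gs i h).IsTree) := by
  classical
  set m := Fintype.card V with hm
  set b := numBlocks G with hb
  have φ0 : G ≃g G.comap ⇑(Fintype.equivFin V).symm := CS.relabIso G (Fintype.equivFin V)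
  set G0 : SimpleGraph (Fin m) := G.comap ⇑(Fintype.equivFin V).symm with hG0
  have hG0c : G0.Connected := φ0.connected_iff.1 hconn
  have hG0nt : ¬ G0.IsTree := fun ht => hnt ((CS.isTree_iso φ0).2 ht)
  have hG0b : numBlocks G0 = b := (CS.numBlocks_iso φ0).symm
  have hble : b + 2 ≤ m := CS.blocks_le hconn hnt
  have hinv : ∀ i, i ≤ m - b - 1 →
      (CS.seqG m G0 i).Connected ∧ numBlocks (CS.seqG m G0 i) = b := by
    intro i
    induction i with
    | zero => exact fun _ => ⟨hG0c, hG0b⟩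
    | succ i ih =>
      intro hile
      obtain ⟨hc', hb'⟩ := ih (by omega)
      have hnt' : ¬ (CS.seqG m G0 i).IsTree := by
        intro ht
        have hcnt := CS.numBlocks_tree ht
        rw [Fintype.card_fin] at hcnt
        omega
      obtain ⟨u, w, -, -, -, hc2, hb2⟩ := CS.nextG_spec hc' hnt'
      exact ⟨hc2, by rw [show numBlocks (CS.seqG m G0 (i+1)) =
        numBlocks (CS.nextG (CS.seqG m G0 i)) from rfl, hb2, hb']⟩
  refine ⟨fun i _ => CS.seqG m G0 i, ⟨by omega, ⟨φ0⟩⟩, ?_, ⟨by omega, ?_⟩, ?_⟩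
  · intro i hi
    obtain ⟨hc', hb'⟩ := hinv i (by omega)
    have hnt' : ¬ (CS.seqG m G0 i).IsTree := by
      intro ht
      have hcnt := CS.numBlocks_tree ht
      rw [Fintype.card_fin] at hcnt
      omega
    obtain ⟨u, w, hadj, hbr, hiso, -, -⟩ := CS.nextG_spec hc' hnt'
    exact ⟨u, w, hadj, hbr, hiso⟩
  · obtain ⟨hc', hb'⟩ := hinv (m - b - 1) le_rfl
    refine CS.isTree_of_numBlocks hc' ?_
    rw [hb', Fintype.card_fin]
    omega
  · intro i hi hne ht
    obtain ⟨hc', hb'⟩ := hinv i (by omega)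
    have hcnt := CS.numBlocks_tree ht
    rw [Fintype.card_fin, hb'] at hcnt
    omega

/-- Every connected graph `G` with `v` vertices and `b` blocks that is not a tree admits a
contraction sequence `G = G_0, G_1, …, G_{v-b-1}` (each step contracting a single
non-bridge edge and simplifying multiple edges) such that `G_{v-b-1}` is a tree and no
earlier `G_i` is a tree. Here `G_i` has `v - i` vertices, modeled on `Fin (v - i)`. -/
theorem exists_contraction_sequence {V : Type*} [Fintype V] [DecidableEq V]
    (G : SimpleGraph V) (hconn : G.Connected) (hnt : ¬ G.IsTree) :
    ∃ Gs : (i : ℕ) → i < Fintype.card V - numBlocks G →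
        SimpleGraph (Fin (Fintype.card V - i)),
      (∃ h0 : 0 < Fintype.card V - numBlocks G, Nonempty (G ≃g Gs 0 h0)) ∧
      (∀ i (h : i + 1 < Fintype.card V - numBlocks G),
        ∃ u w, (Gs i (Nat.lt_of_succ_lt h)).Adj u w ∧
          ¬ (Gs i (Nat.lt_of_succ_lt h)).IsBridge s(u, w) ∧
          Nonempty (contractEdge (Gs i (Nat.lt_of_succ_lt h)) u w ≃g Gs (i + 1) h)) ∧
      (∃ hl : Fintype.card V - numBlocks G - 1 < Fintype.card V - numBlocks G,
        (Gs (Fintype.card V - numBlocks G - 1) hl).IsTree) ∧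
      (∀ i (h : i < Fintype.card V - numBlocks G),
        i ≠ Fintype.card V - numBlocks G - 1 → ¬ (Gs i h).IsTree) := by
  exact exists_contraction_sequence' G hconn hnt
end

section
/- The chromatic polynomial of the wheel graph W_n satisfies P_{W_n}(λ) = λ((λ-2)^{n-1} + (-1)^{n-1}(λ-2)), and substituting λ = 1+q, the coefficient of the lowest-degree nonzero term of P_{W_n}(1+q) has absolute value n - 2 for n ≥ 4. -/
set_option maxHeartbeats 1000000

open Polynomial

/-- Number of proper colorings of `G` with `n` colors. -/
noncomputable def properColorings {V : Type*} (G : SimpleGraph V) (n : ℕ) : ℕ :=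
  Nat.card {f : V → Fin n // ∀ a b, G.Adj a b → f a ≠ f b}

/-- `P` is the chromatic polynomial of `G`. -/
def IsChromaticPolynomial {V : Type*} (G : SimpleGraph V) (P : Polynomial ℤ) : Prop :=
  ∀ n : ℕ, P.eval (n : ℤ) = properColorings G n

/-- The wheel graph on `m + 1` vertices: a cycle on `m` outer vertices, each joined to
one central hub vertex (`none`). -/
def wheelGraph (m : ℕ) : SimpleGraph (Option (Fin m)) :=
  SimpleGraph.fromRel (fun x y =>
    match x, y with
    | none, some _ => True
    | some i, some j => (SimpleGraph.cycleGraph m).Adj i j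
    | _, _ => False)

section Counting

open Fintype

attribute [local instance] Classical.propDecidable

variable {α : Type*} [Fintype α]

private noncomputable def pc (α : Type*) (m : ℕ) : ℕ :=
  Nat.card {f : Fin (m+1) → α // ∀ i : Fin m, f i.castSucc ≠ f i.succ}

private noncomputable def pcA (α : Type*) (m : ℕ) : ℕ :=
  Nat.card {f : Fin (m+1) → α //
    (∀ i : Fin m, f i.castSucc ≠ f i.succ) ∧ f 0 = f (Fin.last m)}

private noncomputable def pcB (α : Type*) (m : ℕ) : ℕ :=
  Nat.card {f : Fin (m+1) → α //
    (∀ i : Fin m, f i.castSucc ≠ f i.succ) ∧ f 0 ≠ f (Fin.last m)}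

private lemma pc_zero : pc α 0 = card α := by
  rw [pc, Nat.card_congr ((Equiv.subtypeUnivEquiv (fun f => fun i => i.elim0)).trans
    (Equiv.funUnique (Fin 1) α)), Nat.card_eq_fintype_card]

private lemma pc_succ (m : ℕ) : pc α (m+1) = pc α m * (card α - 1) := by
  unfold pc
  have e : {f : Fin (m+2) → α // ∀ i : Fin (m+1), f i.castSucc ≠ f i.succ} ≃
      Σ g : {f : Fin (m+1) → α // ∀ i : Fin m, f i.castSucc ≠ f i.succ},
        {x : α // x ≠ g.1 (Fin.last m)} := by
    refine ⟨fun f => ⟨⟨Fin.init f.1, ?_⟩, ⟨f.1 (Fin.last (m+1)), ?_⟩⟩,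
      fun p => ⟨Fin.snoc p.1.1 p.2.1, ?_⟩, ?_, ?_⟩
    · intro i
      have := f.2 i.castSucc
      simpa [Fin.init] using this
    · have := f.2 (Fin.last m)
      simp only [Fin.succ_last] at this
      simpa [Fin.init] using this.symm
    · intro i
      induction i using Fin.lastCases with
      | last =>
        simp only [Fin.snoc_castSucc, Fin.succ_last, Fin.snoc_last]
        exact fun h => p.2.2 h.symm
      | cast j =>
        have := p.1.2 j
        rw [Fin.succ_castSucc, Fin.snoc_castSucc, Fin.snoc_castSucc]; exact this
    · intro f
      ext i
      simp [Fin.snoc_init_self]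
    · intro p
      have h1 : Fin.init (Fin.snoc p.1.1 p.2.1 : Fin (m+2) → α) = p.1.1 := by
        ext i; simp [Fin.init_snoc]
      refine Sigma.ext (Subtype.ext h1) ?_
      rw [Subtype.heq_iff_coe_eq]
      · simp
      · intro x
        simp only [h1]
  rw [Nat.card_congr e, Nat.card_eq_fintype_card, Fintype.card_sigma]
  rw [Finset.sum_congr rfl
    (fun g _ => Fintype.card_subtype_compl (p := fun x => x = g.1 (Fin.last m)))]
  simp [Fintype.card_subtype_eq, mul_comm, Nat.card_eq_fintype_card]

private lemma pc_eq (m : ℕ) : pc α m = card α * (card α - 1) ^ m := by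
  induction m with
  | zero => simp [pc_zero]
  | succ k ih => rw [pc_succ, ih, pow_succ, mul_assoc]

private lemma pc_int (m : ℕ) :
    (pc α m : ℤ) = (card α : ℤ) * ((card α : ℤ) - 1) ^ m := by
  rcases Nat.eq_zero_or_pos (card α) with h | h
  · rw [pc_eq, h]; simp
  · rw [pc_eq]
    push_cast [h]
    rfl

private lemma card_split {β : Type*} [Finite β] (P Q : β → Prop) :
    Nat.card {f // P f ∧ Q f} + Nat.card {f // P f ∧ ¬ Q f} = Nat.card {f // P f} := by
  have : Fintype β := Fintype.ofFinite _
  rw [Nat.card_eq_fintype_card, Nat.card_eq_fintype_card, Nat.card_eq_fintype_card]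
  rw [Fintype.card_congr (Equiv.subtypeSubtypeEquivSubtypeInter P Q).symm,
      Fintype.card_congr (Equiv.subtypeSubtypeEquivSubtypeInter P (fun f => ¬ Q f)).symm,
      Fintype.card_congr (Equiv.sumCompl (fun g : {f // P f} => Q g.1)).symm,
      Fintype.card_sum]

private lemma pcA_add_pcB (m : ℕ) : pcA α m + pcB α m = pc α m :=
  card_split _ _

private lemma pcA_succ (m : ℕ) : pcA α (m+1) = pcB α m := by
  unfold pcA pcB
  apply Nat.card_congr
  refine ⟨fun f => ⟨Fin.init f.1, ?_, ?_⟩, fun g => ⟨Fin.snoc g.1 (g.1 0), ?_, ?_⟩, ?_, ?_⟩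
  · intro i
    have := f.2.1 i.castSucc
    simpa [Fin.init] using this
  · have h := f.2.1 (Fin.last m)
    rw [Fin.succ_last, ← f.2.2] at h
    have h0 : (Fin.init f.1) 0 = f.1 0 := by simp [Fin.init]
    simpa [Fin.init, h0] using fun hc => h hc.symm
  · intro i
    induction i using Fin.lastCases with
    | last =>
      simp only [Fin.snoc_castSucc, Fin.succ_last, Fin.snoc_last]
      exact fun h => g.2.2 h.symm
    | cast j =>
      have := g.2.1 j
      rw [Fin.succ_castSucc, Fin.snoc_castSucc, Fin.snoc_castSucc]; exact this
  · have h0 : (0 : Fin (m+2)) = Fin.castSucc 0 := rfl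
    rw [h0, Fin.snoc_castSucc, Fin.snoc_last]
  · intro f
    apply Subtype.ext
    ext i
    induction i using Fin.lastCases with
    | last =>
      simp only [Fin.snoc_last]
      have h0 : (Fin.init f.1) 0 = f.1 0 := rfl
      rw [h0, ← f.2.2]
    | cast j => simp [Fin.snoc_castSucc, Fin.init]
  · intro g
    apply Subtype.ext
    ext i
    simp [Fin.init_snoc]

private lemma pcA_one : pcA α 1 = 0 := by
  have : IsEmpty {f : Fin 2 → α //
      (∀ i : Fin 1, f i.castSucc ≠ f i.succ) ∧ f 0 = f (Fin.last 1)} :=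
    ⟨fun f => f.2.1 0 f.2.2⟩
  rw [pcA, Nat.card_of_isEmpty]

private lemma pcA_int (m : ℕ) (hm : 1 ≤ m) :
    (pcA α m : ℤ) = ((card α : ℤ) - 1) ^ m + (-1) ^ m * ((card α : ℤ) - 1) := by
  induction m with
  | zero => omega
  | succ k ih =>
    rcases Nat.eq_zero_or_pos k with hk | hk
    · subst hk
      rw [pcA_one]
      push_cast
      ring
    · have hab : (pcA α k : ℤ) + (pcB α k : ℤ) = (pc α k : ℤ) := by
        exact_mod_cast congrArg (Nat.cast : ℕ → ℤ) (pcA_add_pcB (α := α) k)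
      have : (pcA α (k+1) : ℤ) = (pc α k : ℤ) - (pcA α k : ℤ) := by
        rw [pcA_succ]; omega
      rw [this, pc_int, ih hk]
      ring

/-- Counting proper colorings of the cycle graph. -/
private lemma cycle_count (k : ℕ) :
    (Nat.card {g : Fin (k+2) → α //
        ∀ a b, (SimpleGraph.cycleGraph (k+2)).Adj a b → g a ≠ g b} : ℤ)
      = ((card α : ℤ) - 1) ^ (k+2) + (-1) ^ (k+2) * ((card α : ℤ) - 1) := by
  have key : ∀ i : Fin (k+1), (i.castSucc : Fin (k+2)) + 1 = i.succ := by
    intro i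
    apply Fin.ext
    simp [Fin.add_def, Fin.val_succ, Nat.mod_eq_of_lt (by omega : i.val + 1 < k + 2)]
  have last_add_one : (Fin.last (k+1) : Fin (k+2)) + 1 = 0 := by
    apply Fin.ext
    simp [Fin.add_def]
  have e1 : {g : Fin (k+2) → α // ∀ a b, (SimpleGraph.cycleGraph (k+2)).Adj a b → g a ≠ g b} ≃
      {g : Fin (k+2) → α // ∀ i : Fin (k+2), g i ≠ g (i+1)} := by
    apply Equiv.subtypeEquivRight
    intro g
    constructor
    · intro h i
      apply h
      rw [SimpleGraph.cycleGraph_adj]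
      right
      exact add_sub_cancel_left i 1
    · intro h a b hab
      rw [SimpleGraph.cycleGraph_adj] at hab
      rcases hab with hab | hab
      · have ha : a = b + 1 := by rw [sub_eq_iff_eq_add] at hab; rw [hab]; exact add_comm 1 b
        subst ha
        exact (h b).symm
      · have hb : b = a + 1 := by rw [sub_eq_iff_eq_add] at hab; rw [hab]; exact add_comm 1 a
        subst hb
        exact h a
  have e2 : {g : Fin (k+2) → α // ∀ i : Fin (k+2), g i ≠ g (i+1)} ≃
      {f : Fin (k+3) → α //
        (∀ i : Fin (k+2), f i.castSucc ≠ f i.succ) ∧ f 0 = f (Fin.last (k+2))} := by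
    have snoc_succ : ∀ (g : Fin (k+2) → α) (i : Fin (k+2)),
        (Fin.snoc g (g 0) : Fin (k+3) → α) i.succ = g (i + 1) := by
      intro g i
      induction i using Fin.lastCases with
      | last => rw [Fin.succ_last, Fin.snoc_last, last_add_one]
      | cast j => rw [Fin.succ_castSucc, Fin.snoc_castSucc, key]
    refine ⟨fun g => ⟨Fin.snoc g.1 (g.1 0), ?_, ?_⟩, fun f => ⟨Fin.init f.1, ?_⟩, ?_, ?_⟩
    · intro i
      rw [Fin.snoc_castSucc, snoc_succ]
      exact g.2 i
    · have h0 : (0 : Fin (k+3)) = Fin.castSucc 0 := rfl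
      rw [h0, Fin.snoc_castSucc, Fin.snoc_last]
    · intro i
      induction i using Fin.lastCases with
      | last =>
        rw [last_add_one]
        have hL := f.2.1 (Fin.last (k+1))
        rw [Fin.succ_last, ← f.2.2] at hL
        have h0 : (Fin.init f.1) 0 = f.1 0 := rfl
        have hLL : (Fin.init f.1) (Fin.last (k+1)) = f.1 (Fin.castSucc (Fin.last (k+1))) := rfl
        rw [h0, hLL]
        exact hL
      | cast j =>
        have := f.2.1 j.castSucc
        rw [Fin.succ_castSucc] at this
        have hk2 : (j.castSucc : Fin (k+2)) + 1 = j.succ := key j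
        rw [hk2]
        exact this
    · intro g
      apply Subtype.ext
      ext i
      simp [Fin.init_snoc]
    · intro f
      apply Subtype.ext
      ext i
      induction i using Fin.lastCases with
      | last =>
        simp only [Fin.snoc_last]
        have h0 : (Fin.init f.1) 0 = f.1 0 := rfl
        rw [h0, ← f.2.2]
      | cast j => simp [Fin.snoc_castSucc, Fin.init]
  rw [Nat.card_congr (e1.trans e2)]
  have hpca : Nat.card {f : Fin (k+3) → α //
      (∀ i : Fin (k+2), f i.castSucc ≠ f i.succ) ∧ f 0 = f (Fin.last (k+2))}
      = pcA α (k+2) := rfl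
  have hint := pcA_int (α := α) (k+2) (Nat.succ_le_succ (Nat.zero_le _))
  rw [hpca, hint]

private lemma wheel_adj_none (m : ℕ) (i : Fin m) : (wheelGraph m).Adj none (some i) := by
  rw [wheelGraph, SimpleGraph.fromRel_adj]
  exact ⟨by simp, Or.inl trivial⟩

private lemma wheel_adj_some (m : ℕ) (i j : Fin m) :
    (wheelGraph m).Adj (some i) (some j) ↔ (SimpleGraph.cycleGraph m).Adj i j := by
  rw [wheelGraph, SimpleGraph.fromRel_adj]
  constructor
  · rintro ⟨hne, h | h⟩
    · exact h
    · exact h.symm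
  · intro h
    exact ⟨by simpa using h.ne, Or.inl h⟩

private lemma wheel_proper_iff (m : ℕ) (t : ℕ) (F : Option (Fin m) → Fin t) :
    (∀ a b, (wheelGraph m).Adj a b → F a ≠ F b) ↔
      ((∀ i, F (some i) ≠ F none) ∧
        (∀ a b, (SimpleGraph.cycleGraph m).Adj a b → F (some a) ≠ F (some b))) := by
  constructor
  · intro h
    exact ⟨fun i => h _ _ (wheel_adj_none m i).symm,
      fun a b hab => h _ _ ((wheel_adj_some m a b).mpr hab)⟩
  · rintro ⟨h1, h2⟩ a b hab
    match a, b with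
    | none, none => exact absurd hab (SimpleGraph.irrefl _)
    | none, some j => exact fun e => h1 j e.symm
    | some i, none => exact h1 i
    | some i, some j => exact h2 i j ((wheel_adj_some m i j).mp hab)

/-- Counting proper colorings of the wheel graph. -/
private lemma wheel_count (k : ℕ) (t : ℕ) :
    (properColorings (wheelGraph (k+2)) t : ℤ)
      = (t : ℤ) * (((t : ℤ) - 2) ^ (k+2) + (-1) ^ (k+2) * ((t : ℤ) - 2)) := by
  rw [properColorings]
  have e : {F : Option (Fin (k+2)) → Fin t // ∀ a b, (wheelGraph (k+2)).Adj a b → F a ≠ F b} ≃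
      Σ c : Fin t, {g : Fin (k+2) → {x : Fin t // x ≠ c} //
        ∀ a b, (SimpleGraph.cycleGraph (k+2)).Adj a b → g a ≠ g b} := by
    refine ⟨fun F => ⟨F.1 none, ⟨fun i => ⟨F.1 (some i), ?_⟩, ?_⟩⟩,
      fun p => ⟨fun o => Option.elim o p.1 (fun i => (p.2.1 i).1), ?_⟩, ?_, ?_⟩
    · exact ((wheel_proper_iff _ _ F.1).mp F.2).1 i
    · intro a b hab e
      exact ((wheel_proper_iff _ _ F.1).mp F.2).2 a b hab (congrArg Subtype.val e)
    · rw [wheel_proper_iff]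
      refine ⟨fun i => (p.2.1 i).2, fun a b hab e => ?_⟩
      exact p.2.2 a b hab (Subtype.ext e)
    · intro F
      apply Subtype.ext
      funext o
      cases o <;> rfl
    · intro p
      rfl
  rw [Nat.card_congr e, Nat.card_eq_fintype_card, Fintype.card_sigma]
  push_cast
  have hsum : ∀ c : Fin t, (Fintype.card {g : Fin (k+2) → {x : Fin t // x ≠ c} //
      ∀ a b, (SimpleGraph.cycleGraph (k+2)).Adj a b → g a ≠ g b} : ℤ)
      = ((t : ℤ) - 2) ^ (k+2) + (-1) ^ (k+2) * ((t : ℤ) - 2) := by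
    intro c
    have hcard : (Fintype.card {x : Fin t // x ≠ c} : ℤ) = (t : ℤ) - 1 := by
      rw [Fintype.card_subtype_compl (p := fun x => x = c), Fintype.card_subtype_eq,
        Fintype.card_fin]
      have h1 : 1 ≤ t := c.pos
      push_cast [h1]
      ring
    rw [← Nat.card_eq_fintype_card, cycle_count, hcard]
    ring_nf
  rw [Finset.sum_congr rfl (fun c _ => hsum c), Finset.sum_const, Finset.card_univ,
    Fintype.card_fin, nsmul_eq_mul]

end Counting

private lemma wheel_poly_eval (k : ℕ) (t : ℕ) :
    (X * ((X - 2) ^ (k+2) + (-1) ^ (k+2) * (X - 2)) : Polynomial ℤ).eval (t : ℤ)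
      = (properColorings (wheelGraph (k+2)) t : ℤ) := by
  rw [wheel_count]
  simp

/-- The chromatic polynomial of the wheel graph `W_n` (on `n` vertices, with `n - 1`
outer vertices) satisfies `P_{W_n}(λ) = λ((λ-2)^{n-1} + (-1)^{n-1}(λ-2))`, and the
coefficient of the lowest-degree nonzero term of `P_{W_n}(1+q)` has absolute value
`n - 2` for `n ≥ 4`. -/
theorem chromaticPolynomial_wheel (n : ℕ) (hn : 4 ≤ n) (P : Polynomial ℤ)
    (hP : IsChromaticPolynomial (wheelGraph (n - 1)) P) :
    P = X * ((X - 2) ^ (n - 1) + (-1) ^ (n - 1) * (X - 2)) ∧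
    ((P.comp (X + 1)).trailingCoeff).natAbs = n - 2 := by
  obtain ⟨j, rfl⟩ : ∃ j, n = j + 4 := ⟨n - 4, by omega⟩
  have hm : j + 4 - 1 = j + 3 := by omega
  rw [hm] at hP ⊢
  have hm2 : j + 4 - 2 = j + 2 := by omega
  rw [hm2]
  set Q : Polynomial ℤ := X * ((X - 2) ^ (j+3) + (-1) ^ (j+3) * (X - 2)) with hQdef
  have hPQ : P = Q := by
    have hroots : ∀ t : ℕ, (P - Q).eval (t : ℤ) = 0 := by
      intro t
      have h1 : Q.eval (t : ℤ) = (properColorings (wheelGraph (j+3)) t : ℤ) :=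
        wheel_poly_eval (j+1) t
      rw [eval_sub, hP t, h1, sub_self]
    have hz : P - Q = 0 := by
      apply Polynomial.eq_zero_of_infinite_isRoot
      apply Set.infinite_of_injective_forall_mem (f := (Nat.cast : ℕ → ℤ))
        Nat.cast_injective
      intro t
      exact hroots t
    exact sub_eq_zero.mp hz
  refine ⟨hPQ, ?_⟩
  rw [hPQ]
  have hcomp : Q.comp (X + 1) = (X + 1) * ((X - 1) ^ (j+3) + (-1) ^ (j+3) * (X - 1)) := by
    rw [hQdef]
    simp only [mul_comp, add_comp, sub_comp, pow_comp, X_comp, neg_comp, one_comp,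
      Polynomial.ofNat_comp]
    ring
  rw [hcomp]
  set R : Polynomial ℤ := (X - 1) ^ (j+3) + (-1) ^ (j+3) * (X - 1) with hRdef
  have hR0 : R.coeff 0 = 0 := by
    rw [coeff_zero_eq_eval_zero, hRdef]
    simp only [eval_add, eval_mul, eval_pow, eval_sub, eval_X, eval_one, eval_neg]
    ring
  have hXsub : (X - 1 : Polynomial ℤ) = X + C (-1) := by
    simp [sub_eq_add_neg]
  have hR1 : R.coeff 1 = (-1) ^ (j + 2) * ((j : ℤ) + 2) := by
    rw [hRdef, coeff_add, hXsub, coeff_X_add_C_pow]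
    rw [show ((-1 : Polynomial ℤ) ^ (j+3)) = C ((-1 : ℤ) ^ (j+3)) by simp, coeff_C_mul]
    simp only [coeff_add, coeff_X_one, coeff_C]
    norm_num
    rw [pow_succ]
    push_cast
    ring
  have hR1ne : R.coeff 1 ≠ 0 := by
    rw [hR1]
    exact mul_ne_zero (pow_ne_zero _ (by norm_num)) (by positivity)
  have hRne : R ≠ 0 := fun h => hR1ne (by rw [h]; simp)
  have htd : R.natTrailingDegree = 1 := by
    have hle : R.natTrailingDegree ≤ 1 := natTrailingDegree_le_of_ne_zero hR1ne
    have hne0 : R.natTrailingDegree ≠ 0 := by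
      rw [Ne, natTrailingDegree_eq_zero]
      push_neg
      exact ⟨hRne, hR0⟩
    omega
  have htc : R.trailingCoeff = (-1) ^ (j + 2) * ((j : ℤ) + 2) := by
    rw [trailingCoeff, htd, hR1]
  have htX : (X + 1 : Polynomial ℤ).trailingCoeff = 1 := by
    have h0 : (X + 1 : Polynomial ℤ).coeff 0 = 1 := by simp
    have hd : (X + 1 : Polynomial ℤ).natTrailingDegree = 0 := by
      rw [natTrailingDegree_eq_zero]
      right
      rw [h0]; norm_num
    rw [trailingCoeff, hd, h0]
  rw [trailingCoeff_mul, htX, htc, one_mul, Int.natAbs_mul, Int.natAbs_pow]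
  simp only [Int.natAbs_neg, Int.natAbs_one, one_pow, one_mul]
  omega
end
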